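/- arXiv:1201.5825 — 6 statements merged into one kernel-verified Lean document; each statement's English description precedes it below -/
import Mathlib

section
/- The number of non-crossing partitions of the set {1,...,kn} in which every block has exactly k elements equals binom(kn, n) / ((k-1)n + 1). -/
open scoped BigOperators Classical

/-- Partitions of `Fin n` (i.e. of `{1,…,n}`). -/
abbrev NCP (n : ℕ) := Finpartition (Finset.univ : Finset (Fin n))

/-- `x` and `y` lie in the same block of `P`. -/
def pRel {n : ℕ} (P : NCP n) (x y : Fin n) : Prop := ∃ t ∈ P.parts, x ∈ t ∧ y ∈ t

/-- `P` is a non-crossing partition. -/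
def IsNonCrossing {n : ℕ} (P : NCP n) : Prop :=
  ∀ a b c d : Fin n, a < b → b < c → c < d → pRel P a c → pRel P b d → pRel P a b

/-- Every block of `P` has exactly `k` elements (`k`-equal). -/
def IsKEqual (k : ℕ) {n : ℕ} (P : NCP n) : Prop := ∀ t ∈ P.parts, t.card = k

/-- Every block of `P` has size divisible by `k` (`k`-divisible). -/
def IsKDivisible (k : ℕ) {n : ℕ} (P : NCP n) : Prop := ∀ t ∈ P.parts, k ∣ t.card

/-- Every block of `P` contains only numbers of one residue class mod `k`. -/
def IsKPreserving (k : ℕ) {n : ℕ} (P : NCP n) : Prop :=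
  ∀ t ∈ P.parts, ∀ x ∈ t, ∀ y ∈ t, (x : ℕ) % k = (y : ℕ) % k

/-- The relation on `{1,…,2n}` obtained by putting `P` on the odd positions and `Q` on
the even positions (0-indexed: `P` on evens, `Q` on odds). -/
def jointRel {n : ℕ} (P Q : NCP n) (x y : Fin (2 * n)) : Prop :=
  ((x : ℕ) % 2 = 0 ∧ (y : ℕ) % 2 = 0 ∧
      pRel P ⟨(x : ℕ) / 2, by have := x.isLt; omega⟩ ⟨(y : ℕ) / 2, by have := y.isLt; omega⟩) ∨
  ((x : ℕ) % 2 = 1 ∧ (y : ℕ) % 2 = 1 ∧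
      pRel Q ⟨(x : ℕ) / 2, by have := x.isLt; omega⟩ ⟨(y : ℕ) / 2, by have := y.isLt; omega⟩)

/-- A symmetric-relation analogue of non-crossing. -/
def RelNonCrossing {m : ℕ} (R : Fin m → Fin m → Prop) : Prop :=
  ∀ a b c d : Fin m, a < b → b < c → c < d → R a c → R b d → R a b

/-- `Q` is the Kreweras complement of `P`: the union `P ∪ Q` (interleaved) is non-crossing and
`Q` is the largest such partition in the reverse refinement order. -/
def IsKr {n : ℕ} (P Q : NCP n) : Prop :=
  RelNonCrossing (jointRel P Q) ∧ ∀ Q' : NCP n, RelNonCrossing (jointRel P Q') → Q' ≤ Q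

/-!
A non-crossing partition into blocks of size `k` is determined by its set of block minima
(openers), and the sets that occur are exactly the sets `S` satisfying the ballot condition: every
initial segment of the ground set has at most `k` times as many elements as it has openers. Both
directions go by induction, removing the block of the last opener; non-crossingness forces that
block to consist of the `k` consecutive elements starting at it.

The ballot sets are counted by the cycle lemma. For an `n`-subset `T` of `ℤ/(kn+1)`, the walk
with step `k - 1` at elements of `T` and `-1` elsewhere drops by `1` over a period, so exactly one
rotation of `T`, the one starting at the first minimum of the walk, stays non-negative; it then
avoids the last point. Hence `kn + 1` times the number of ballot `n`-subsets of `{0,…,kn-1}` is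
`binom(kn+1, n)`, which rearranges to `binom(kn, n) / ((k-1)n + 1)`.
-/

open Finset

variable {α : Type*} [LinearOrder α]

def Dominates (k : ℕ) (S s : Finset α) : Prop :=
  ∀ j, #{x ∈ s | x < j} ≤ k * #{x ∈ S | x < j}

def Finset.IsInitialSegment (t u : Finset α) : Prop :=
  t ⊆ u ∧ ∀ y ∈ u, ∀ x ∈ t, y ≤ x → y ∈ t

namespace Finset

variable {t t' u : Finset α}

theorem IsInitialSegment.eq_of_card_eq (ht : t.IsInitialSegment u)
    (ht' : t'.IsInitialSegment u) (h : #t = #t') : t = t' := by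
  suffices t ⊆ t' ∨ t' ⊆ t by
    rcases this with hs | hs
    · exact eq_of_subset_of_card_le hs h.ge
    · exact (eq_of_subset_of_card_le hs h.le).symm
  by_contra! hst
  obtain ⟨⟨x, hxt, hxt'⟩, ⟨y, hyt', hyt⟩⟩ := And.imp not_subset.1 not_subset.1 hst
  rcases le_total x y with hxy | hyx
  · exact hxt' (ht'.2 x (ht.1 hxt) y hyt' hxy)
  · exact hyt (ht.2 y (ht'.1 hyt') x hxt hyx)

theorem exists_isInitialSegment_card_eq {k : ℕ} (h : k ≤ #u) :
    ∃ t, t.IsInitialSegment u ∧ #t = k := by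
  induction u using Finset.induction_on_max with
  | empty => exact ⟨∅, ⟨empty_subset _, by simp⟩, by simp_all⟩
  | insert a u hlt ih =>
    have ha : a ∉ u := fun ha => (hlt a ha).false
    rw [card_insert_of_notMem ha] at h
    rcases h.lt_or_eq with h | h
    · obtain ⟨t, ⟨htu, hinit⟩, rfl⟩ := ih (by omega)
      refine ⟨t, ⟨htu.trans (subset_insert a u), fun y hy x hx hyx => ?_⟩, rfl⟩
      rcases mem_insert.1 hy with rfl | hy
      · exact absurd (hlt x (htu hx)) hyx.not_gt
      · exact hinit y hy x hx hyx
    · exact ⟨insert a u, ⟨Subset.rfl, fun y hy _ _ _ => hy⟩, by rw [card_insert_of_notMem ha, h]⟩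

end Finset

namespace Dominates

variable {k : ℕ} {S s t : Finset α} {M : α}

theorem exists_block (hdom : Dominates k S s) (hk : 0 < k) (hcard : #s = k * #S)
    (hM : M ∈ S) (hmax : ∀ x ∈ S, x ≤ M) (hSs : S ⊆ s) :
    ∃ t ⊆ s, #t = k ∧ M ∈ t ∧ (∀ x ∈ t, M ≤ x) ∧
      ∀ a ∈ t, ∀ b ∈ s, ∀ d ∈ t, a < b → b < d → b ∈ t := by
  have hlt : {x ∈ S | x < M} = S.erase M := by
    ext x
    simp only [mem_filter, mem_erase]
    exact ⟨fun ⟨hx, hxM⟩ => ⟨hxM.ne, hx⟩, fun ⟨hxM, hx⟩ => ⟨hx, (hmax x hx).lt_of_ne hxM⟩⟩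
  have hsplit := card_filter_add_card_filter_not (· < M) (s := s)
  simp only [not_lt] at hsplit
  have hbelow := hdom M
  rw [hlt, card_erase_of_mem hM, Nat.mul_sub_one] at hbelow
  have hS : k ≤ k * #S := Nat.le_mul_of_pos_right k (card_pos.2 ⟨M, hM⟩)
  obtain ⟨t, ⟨hts, hinit⟩, htk⟩ :=
    exists_isInitialSegment_card_eq (u := {x ∈ s | M ≤ x}) (k := k) (by omega)
  have htM : ∀ x ∈ t, M ≤ x := fun x hx => (mem_filter.1 (hts hx)).2
  obtain ⟨x, hx⟩ := card_pos.1 (htk ▸ hk)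
  refine ⟨t, hts.trans (filter_subset _ _), htk,
    hinit M (mem_filter.2 ⟨hSs hM, le_rfl⟩) x hx (htM x hx), htM, fun a ha b hb d hd hab hbd => ?_⟩
  exact hinit b (mem_filter.2 ⟨hb, (htM a ha).trans hab.le⟩) d hd hbd.le

theorem erase_sdiff (hdom : Dominates k S s) (hcard : #s = k * #S) (hM : M ∈ S)
    (hmax : ∀ x ∈ S, x ≤ M) (hts : t ⊆ s) (htk : #t = k) (htM : ∀ x ∈ t, M ≤ x) :
    Dominates k (S.erase M) (s \ t) := by
  intro j
  by_cases hjM : j ≤ M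
  · have hs : {x ∈ s \ t | x < j} = {x ∈ s | x < j} := by
      ext x
      simp only [mem_filter, mem_sdiff]
      exact ⟨fun ⟨⟨hx, _⟩, hxj⟩ => ⟨hx, hxj⟩,
        fun ⟨hx, hxj⟩ => ⟨⟨hx, fun hxt => (htM x hxt).not_gt (hxj.trans_le hjM)⟩, hxj⟩⟩
    rw [hs, filter_erase, erase_eq_of_notMem fun h => (mem_filter.1 h).2.not_ge hjM]
    exact hdom j
  · have hS : {x ∈ S.erase M | x < j} = S.erase M :=
      filter_true_of_mem fun x hx => (hmax x (mem_of_mem_erase hx)).trans_lt (not_le.1 hjM)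
    calc #{x ∈ s \ t | x < j} ≤ #(s \ t) := card_filter_le _ _
      _ = k * #(S.erase M) := by
        rw [card_sdiff_of_subset hts, card_erase_of_mem hM, hcard, htk, Nat.mul_sub_one]
      _ = k * #{x ∈ S.erase M | x < j} := by rw [hS]

end Dominates

namespace Finpartition

section Openers

variable {s : Finset α} (P : Finpartition s)

def NonCrossing : Prop :=
  ∀ a b c d, a < b → b < c → c < d → a ∈ P.part c → b ∈ P.part d → a ∈ P.part b

def openers : Finset α := {x ∈ s | ∀ y ∈ P.part x, x ≤ y}

theorem openers_subset : P.openers ⊆ s := filter_subset _ _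

theorem le_of_mem_openers {o y : α} (ho : o ∈ P.openers) (hy : y ∈ P.part o) : o ≤ y :=
  (mem_filter.1 ho).2 y hy

theorem exists_mem_openers_le {x : α} (hx : x ∈ s) :
    ∃ o ∈ P.openers, o ≤ x ∧ P.part o = P.part x := by
  set o := (P.part x).min' (P.part_nonempty.2 hx)
  have ho : o ∈ P.part x := min'_mem _ _
  have hpo : P.part o = P.part x := P.part_eq_of_mem (P.part_mem.2 hx) ho
  refine ⟨o, mem_filter.2 ⟨P.part_subset x ho, fun y hy => ?_⟩, min'_le _ _ (P.mem_part hx), hpo⟩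
  exact min'_le _ _ (hpo ▸ hy)

theorem card_openers : #P.openers = #P.parts := by
  refine card_nbij P.part (fun o ho => P.part_mem.2 (P.openers_subset ho)) ?_ ?_
  · intro o ho o' ho' h
    have h₁ := P.le_of_mem_openers ho (h ▸ P.mem_part (P.openers_subset ho'))
    have h₂ := P.le_of_mem_openers ho' (h.symm ▸ P.mem_part (P.openers_subset ho))
    exact le_antisymm h₁ h₂
  · intro u hu
    obtain ⟨x, hx⟩ := P.nonempty_of_mem_parts hu
    obtain ⟨o, ho, -, hpo⟩ := P.exists_mem_openers_le (P.le hu hx)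
    exact ⟨o, ho, hpo.trans (P.part_eq_of_mem hu hx)⟩

variable {P} {k : ℕ}

theorem card_eq_mul_card_openers (hP : ∀ t ∈ P.parts, #t = k) : #s = k * #P.openers := by
  rw [card_openers, ← P.sum_card_parts, sum_const_nat hP, mul_comm]

theorem dominates_openers (hP : ∀ t ∈ P.parts, #t = k) : Dominates k P.openers s := by
  intro j
  calc #{x ∈ s | x < j} ≤ #({o ∈ P.openers | o < j}.biUnion P.part) := by
        refine card_le_card fun x hx => ?_
        obtain ⟨hxs, hxj⟩ := mem_filter.1 hx
        obtain ⟨o, ho, hox, hpo⟩ := P.exists_mem_openers_le hxs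
        exact mem_biUnion.2 ⟨o, mem_filter.2 ⟨ho, hox.trans_lt hxj⟩, hpo ▸ P.mem_part hxs⟩
    _ ≤ ∑ o ∈ {o ∈ P.openers | o < j}, #(P.part o) := card_biUnion_le
    _ = k * #{o ∈ P.openers | o < j} := by
        rw [sum_const_nat fun o ho => hP _ (P.part_mem.2 (P.openers_subset (mem_filter.1 ho).1)),
          mul_comm]

theorem NonCrossing.isInitialSegment_part (hP : P.NonCrossing) {M : α} (hM : M ∈ P.openers)
    (hmax : ∀ o ∈ P.openers, o ≤ M) : (P.part M).IsInitialSegment {x ∈ s | M ≤ x} := by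
  refine ⟨fun y hy => mem_filter.2 ⟨P.part_subset M hy, P.le_of_mem_openers hM hy⟩,
    fun y hy e he hye => ?_⟩
  obtain ⟨hys, hMy⟩ := mem_filter.1 hy
  by_contra hyM
  -- The block of `y` starts before `M`, so it would cross the block of `M` at `M < y < e`.
  obtain ⟨o, ho, -, hpo⟩ := P.exists_mem_openers_le hys
  have hoM : o < M := (hmax o ho).lt_of_ne (by rintro rfl; exact hyM (hpo ▸ P.mem_part hys))
  have hMy' : M < y := hMy.lt_of_ne (by rintro rfl; exact hyM (P.mem_part hys))
  have hye' : y < e := hye.lt_of_ne (by rintro rfl; exact hyM he)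
  have hoy : o ∈ P.part y := hpo ▸ P.mem_part (P.openers_subset ho)
  have hMe : M ∈ P.part e := (P.mem_part_iff_exists.1 he).elim fun u ⟨hu, heu, hMu⟩ =>
    P.mem_part_iff_exists.2 ⟨u, hu, hMu, heu⟩
  exact (P.le_of_mem_openers hM (hP o M y e hoM hMy' hye' hoy hMe)).not_gt hoM

end Openers

section Avoid

variable {s t : Finset α} (P : Finpartition s)

theorem parts_avoid (ht : t ∈ P.parts) : (P.avoid t).parts = P.parts.erase t := by
  ext u
  rw [mem_avoid, mem_erase]
  constructor
  · rintro ⟨d, hd, hdt, rfl⟩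
    have hne : d ≠ t := by rintro rfl; exact hdt le_rfl
    have hdisj : Disjoint d t := P.disjoint hd ht hne
    rw [hdisj.sdiff_eq_left]
    exact ⟨hne, hd⟩
  · rintro ⟨hne, hu⟩
    have hdisj : Disjoint u t := P.disjoint hu ht hne
    exact ⟨u, hu, fun hut => P.ne_bot hu (hdisj.eq_bot_of_le hut), hdisj.sdiff_eq_left⟩

theorem part_avoid (ht : t ∈ P.parts) {x : α} (hx : x ∉ t) : (P.avoid t).part x = P.part x := by
  by_cases hxs : x ∈ s
  · refine (P.avoid t).part_eq_of_mem ?_ (P.mem_part hxs)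
    rw [P.parts_avoid ht]
    exact mem_erase.2 ⟨fun h => hx (h ▸ P.mem_part hxs), P.part_mem.2 hxs⟩
  · rw [(P.avoid t).part_eq_empty.2 fun h => hxs (mem_sdiff.1 h).1, P.part_eq_empty.2 hxs]

theorem openers_avoid (ht : t ∈ P.parts) : (P.avoid t).openers = P.openers \ t := by
  ext x
  simp only [openers, mem_filter, mem_sdiff]
  constructor
  · rintro ⟨⟨hxs, hxt⟩, h⟩
    exact ⟨⟨hxs, P.part_avoid ht hxt ▸ h⟩, hxt⟩
  · rintro ⟨⟨hxs, h⟩, hxt⟩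
    exact ⟨⟨hxs, hxt⟩, (P.part_avoid ht hxt).symm ▸ h⟩

variable {P}

theorem NonCrossing.avoid (hP : P.NonCrossing) (ht : t ∈ P.parts) : (P.avoid t).NonCrossing := by
  have hsub : ∀ y, (P.avoid t).part y ⊆ P.part y := fun y => by
    by_cases hy : y ∈ t
    · rw [(P.avoid t).part_eq_empty.2 fun h => (mem_sdiff.1 h).2 hy]
      exact empty_subset _
    · exact (P.part_avoid ht hy).le
  intro a b c d hab hbc hcd hac hbd
  rw [P.part_avoid ht (mem_sdiff.1 ((P.avoid t).part_subset d hbd)).2]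
  exact hP a b c d hab hbc hcd (hsub c hac) (hsub d hbd)

theorem eq_of_avoid_eq {Q : Finpartition s} (hP : t ∈ P.parts) (hQ : t ∈ Q.parts)
    (h : P.avoid t = Q.avoid t) : P = Q :=
  Finpartition.ext <| by
    rw [← insert_erase hP, ← insert_erase hQ, ← P.parts_avoid hP, ← Q.parts_avoid hQ, h]

end Avoid

section Extend

variable {t u c : Finset α} (P : Finpartition u) (hb : t ≠ ⊥) (hab : Disjoint u t)
  (hc : u ⊔ t = c)

theorem part_extend_of_mem {x : α} (hx : x ∈ t) : (P.extend hb hab hc).part x = t :=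
  part_eq_of_mem _ (by simp) hx

theorem part_extend_of_notMem {x : α} (hx : x ∉ t) :
    (P.extend hb hab hc).part x = P.part x := by
  by_cases hxu : x ∈ u
  · exact part_eq_of_mem _ (by simp [P.part_mem.2 hxu]) (P.mem_part hxu)
  · rw [(P.extend hb hab hc).part_eq_empty.2 (by rw [← hc, sup_eq_union, mem_union]; tauto),
      P.part_eq_empty.2 hxu]

theorem openers_extend {M : α} (hM : M ∈ t) (htM : ∀ y ∈ t, M ≤ y) :
    (P.extend hb hab hc).openers = insert M P.openers := by
  have hmem : ∀ x, x ∈ c ↔ x ∈ u ∨ x ∈ t := fun x => by rw [← hc, sup_eq_union, mem_union]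
  ext x
  simp only [openers, mem_filter, mem_insert]
  by_cases hxt : x ∈ t
  · rw [part_extend_of_mem P hb hab hc hxt]
    have hxu : x ∉ u := disjoint_right.1 hab hxt
    constructor
    · exact fun ⟨_, h⟩ => Or.inl (le_antisymm (h M hM) (htM x hxt))
    · rintro (rfl | ⟨hxu', -⟩)
      · exact ⟨(hmem x).2 (Or.inr hxt), htM⟩
      · exact absurd hxu' hxu
  · rw [part_extend_of_notMem P hb hab hc hxt, hmem]
    have hxM : x ≠ M := by rintro rfl; exact hxt hM
    simp only [hxt, hxM, or_false, false_or]

variable {P} {hb}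

theorem NonCrossing.extend (hP : P.NonCrossing)
    (hconv : ∀ a ∈ t, ∀ b ∈ c, ∀ d ∈ t, a < b → b < d → b ∈ t) :
    (P.extend hb hab hc).NonCrossing := by
  intro a b x d hab' hbx hxd hax hbd
  have hbc : b ∈ c := part_subset _ d hbd
  have hxc : x ∈ c := (part_nonempty _).1 ⟨a, hax⟩
  by_cases hxt : x ∈ t
  · rw [part_extend_of_mem P hb hab hc hxt] at hax
    rw [part_extend_of_mem P hb hab hc (hconv a hax b hbc x hxt hab' hbx)]
    exact hax
  by_cases hdt : d ∈ t
  · rw [part_extend_of_mem P hb hab hc hdt] at hbd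
    exact absurd (hconv b hbd x hxc d hdt hbx hxd) hxt
  rw [part_extend_of_notMem P hb hab hc hxt] at hax
  rw [part_extend_of_notMem P hb hab hc hdt] at hbd
  rw [part_extend_of_notMem P hb hab hc (disjoint_left.1 hab (P.part_subset d hbd))]
  exact hP a b x d hab' hbx hxd hax hbd

end Extend

variable {k : ℕ} {s : Finset α}

theorem NonCrossing.eq_of_openers_eq {P Q : Finpartition s} (hP : P.NonCrossing)
    (hQ : Q.NonCrossing) (hPk : ∀ t ∈ P.parts, #t = k) (hQk : ∀ t ∈ Q.parts, #t = k)
    (h : P.openers = Q.openers) : P = Q := by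
  induction hn : #P.parts generalizing s with
  | zero =>
    have hQ0 : #Q.parts = 0 := by rw [← card_openers, ← h, card_openers, hn]
    exact Finpartition.ext (by rw [card_eq_zero.1 hn, card_eq_zero.1 hQ0])
  | succ n ih =>
    have hne : P.openers.Nonempty := by rw [← card_pos, card_openers, hn]; omega
    set M := P.openers.max' hne
    have hM : M ∈ P.openers := max'_mem _ _
    have hmax : ∀ o ∈ P.openers, o ≤ M := fun o ho => le_max' _ o ho
    have hMs : M ∈ s := P.openers_subset hM
    have hPt : P.part M ∈ P.parts := P.part_mem.2 hMs
    have hPQ : P.part M = Q.part M :=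
      (hP.isInitialSegment_part hM hmax).eq_of_card_eq
        (hQ.isInitialSegment_part (h ▸ hM) (by rwa [← h]))
        (by rw [hPk _ hPt, hQk _ (Q.part_mem.2 hMs)])
    have hQt : P.part M ∈ Q.parts := hPQ ▸ Q.part_mem.2 hMs
    refine eq_of_avoid_eq hPt hQt (ih (hP.avoid hPt) (hQ.avoid hQt) ?_ ?_ ?_ ?_)
    · exact fun t ht => hPk t (by rw [parts_avoid _ hPt] at ht; exact mem_of_mem_erase ht)
    · exact fun t ht => hQk t (by rw [parts_avoid _ hQt] at ht; exact mem_of_mem_erase ht)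
    · rw [openers_avoid _ hPt, openers_avoid _ hQt, h]
    · rw [parts_avoid _ hPt, card_erase_of_mem hPt, hn, Nat.add_sub_cancel]

theorem exists_nonCrossing_openers_eq (hk : 0 < k) {S : Finset α} (hSs : S ⊆ s)
    (hcard : #s = k * #S) (hdom : Dominates k S s) :
    ∃ P : Finpartition s, P.NonCrossing ∧ (∀ t ∈ P.parts, #t = k) ∧ P.openers = S := by
  induction hn : #S generalizing S s with
  | zero =>
    obtain rfl : S = ∅ := card_eq_zero.1 hn
    obtain rfl : s = ∅ := card_eq_zero.1 (by rw [hcard, hn, mul_zero])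
    refine ⟨Finpartition.empty _, fun a _ c _ _ _ _ hac _ => ?_, by simp, ?_⟩
    · exact absurd (part_subset _ c hac) (notMem_empty a)
    · exact subset_empty.1 (openers_subset _)
  | succ n ih =>
    have hne : S.Nonempty := card_pos.1 (by omega)
    set M := S.max' hne
    have hM : M ∈ S := max'_mem _ _
    have hmax : ∀ x ∈ S, x ≤ M := fun x hx => le_max' _ x hx
    obtain ⟨t, hts, htk, hMt, htM, hconv⟩ := hdom.exists_block hk hcard hM hmax hSs
    obtain ⟨P, hP, hPk, hPS⟩ := ih (S := S.erase M) (s := s \ t)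
      (fun x hx => mem_sdiff.2 ⟨hSs (mem_of_mem_erase hx), fun hxt =>
        ne_of_mem_erase hx (le_antisymm (hmax x (mem_of_mem_erase hx)) (htM x hxt))⟩)
      (by rw [card_sdiff_of_subset hts, card_erase_of_mem hM, hcard, htk, Nat.mul_sub_one])
      (hdom.erase_sdiff hcard hM hmax hts htk htM) (by rw [card_erase_of_mem hM, hn]; rfl)
    refine ⟨P.extend (ne_empty_of_mem hMt) disjoint_sdiff_self_left (sdiff_sup_cancel hts),
      hP.extend _ _ hconv, by simpa [htk] using hPk, ?_⟩
    rw [openers_extend _ _ _ _ hMt htM, hPS, insert_erase hM]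

noncomputable def openersEquiv (hk : 0 < k) (s : Finset α) :
    {P : Finpartition s // P.NonCrossing ∧ ∀ t ∈ P.parts, #t = k} ≃
      {S : Finset α // S ⊆ s ∧ #s = k * #S ∧ Dominates k S s} :=
  Equiv.ofBijective
    (fun P => ⟨P.1.openers, P.1.openers_subset, card_eq_mul_card_openers P.2.2,
      dominates_openers P.2.2⟩)
    ⟨fun P Q h => Subtype.ext (P.2.1.eq_of_openers_eq Q.2.1 P.2.2 Q.2.2 (congrArg Subtype.val h)),
      fun S => by
        obtain ⟨P, hP, hPk, hPS⟩ := exists_nonCrossing_openers_eq hk S.2.1 S.2.2.1 S.2.2.2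
        exact ⟨⟨P, hP, hPk⟩, Subtype.ext hPS⟩⟩

end Finpartition

section CycleLemma

open Pointwise Fin.NatCast

variable {N k : ℕ} [NeZero N] {T : Finset (Fin N)}

variable (k) in
-- The cast `(i : Fin N)` reduces `i` mod `N`, so the walk reads `T` periodically.
def walk (T : Finset (Fin N)) (j : ℕ) : ℤ :=
  ∑ i ∈ range j, ((if (i : Fin N) ∈ T then (k : ℤ) else 0) - 1)

theorem walk_add (T : Finset (Fin N)) (a l : ℕ) :
    walk k T (a + l) = walk k T a + walk k (-(a : Fin N) +ᵥ T) l := by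
  simp only [walk, sum_range_add, mem_neg_vadd_finset_iff, vadd_eq_add, Nat.cast_add]

theorem walk_self (T : Finset (Fin N)) : walk k T N = k * #T - N := by
  rw [walk, sum_sub_distrib,
    ← Fin.sum_univ_eq_sum_range (fun i => if (i : Fin N) ∈ T then (k : ℤ) else 0)]
  simp [Fin.cast_val_eq_self, sum_ite_mem, mul_comm]

theorem walk_eq (T : Finset (Fin N)) {l : ℕ} (hl : l ≤ N) :
    walk k T l = k * #{x ∈ T | x.val < l} - l := by
  have hcard : #{i ∈ range l | ((i : ℕ) : Fin N) ∈ T} = #{x ∈ T | x.val < l} := by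
    refine card_nbij' (fun i => (i : Fin N)) (fun x => (x : ℕ)) ?_ ?_ ?_ ?_ <;> intro i hi <;>
      simp only [coe_filter, mem_range, Set.mem_ofPred_eq] at hi ⊢
    · exact ⟨hi.2, by rw [Fin.val_natCast, Nat.mod_eq_of_lt (by omega)]; exact hi.1⟩
    · exact ⟨hi.2, by rw [Fin.cast_val_eq_self]; exact hi.1⟩
    · rw [Fin.val_natCast, Nat.mod_eq_of_lt (by omega)]
    · exact Fin.cast_val_eq_self i
  rw [walk, sum_sub_distrib, ← sum_filter, sum_const, hcard]
  simp [mul_comm]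

theorem dominates_univ_iff_walk_nonneg (R : Finset (Fin N)) :
    Dominates k R univ ↔ ∀ l < N, 0 ≤ walk k R l := by
  rw [Dominates, Fin.forall_iff]
  refine forall₂_congr fun l hl => ?_
  rw [walk_eq R hl.le, filter_gt_eq_Iio, Fin.card_Iio]
  change l ≤ k * #{x ∈ R | x.val < l} ↔ _
  omega

theorem walk_add_self (hT : k * #T + 1 = N) (j : ℕ) : walk k T (N + j) = walk k T j - 1 := by
  have hN : (N : ℤ) = k * #T + 1 := by exact_mod_cast hT.symm
  rw [walk_add, Fin.natCast_self, neg_zero, zero_vadd, walk_self, hN]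
  ring

theorem eq_of_forall_walk_le (hT : k * #T + 1 = N) {c c' : ℕ} (hc : c < N) (hc' : c' < N)
    (h : ∀ l < N, walk k T c ≤ walk k T (c + l))
    (h' : ∀ l < N, walk k T c' ≤ walk k T (c' + l)) : c = c' := by
  by_contra hne
  wlog hlt : c < c' generalizing c c'
  · exact this hc' hc h' h (Ne.symm hne) (by omega)
  have h₁ := h (c' - c) (by omega)
  have h₂ := h' (N + c - c') (by omega)
  rw [show c + (c' - c) = c' by omega] at h₁
  rw [show c' + (N + c - c') = N + c by omega, walk_add_self hT] at h₂
  omega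

theorem exists_forall_walk_le (hT : k * #T + 1 = N) :
    ∃ c < N, ∀ l < N, walk k T c ≤ walk k T (c + l) := by
  have hex : ∃ c, c < N ∧ ∀ j < N, walk k T c ≤ walk k T j := by
    obtain ⟨c, hc, hmin⟩ := exists_min_image (range N) (walk k T)
      (nonempty_range_iff.2 (NeZero.ne N))
    exact ⟨c, mem_range.1 hc, fun j hj => hmin j (mem_range.2 hj)⟩
  -- The first minimiser works: past the period, `walk_add_self` compares with an earlier point.
  obtain ⟨hc, hmin⟩ := Nat.find_spec hex
  refine ⟨Nat.find hex, hc, fun l hl => ?_⟩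
  by_cases hcl : Nat.find hex + l < N
  · exact hmin _ hcl
  obtain ⟨j, hj⟩ : ∃ j, Nat.find hex + l = N + j := ⟨Nat.find hex + l - N, by omega⟩
  have hjc : j < Nat.find hex := by omega
  obtain ⟨i, hi, hij⟩ : ∃ i < N, walk k T i < walk k T j := by
    simpa [show j < N by omega] using Nat.find_min hex hjc
  rw [hj, walk_add_self hT]
  linarith [hmin i hi]

theorem dominates_neg_vadd_iff (c : Fin N) :
    Dominates k (-c +ᵥ T) univ ↔ ∀ l < N, walk k T c ≤ walk k T (c + l) := by
  simp only [dominates_univ_iff_walk_nonneg, walk_add T c, Fin.cast_val_eq_self,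
    le_add_iff_nonneg_right]

variable (k) in
/-- The cycle lemma: exactly one rotation of each `n`-subset of `Fin N` is dominating. -/
noncomputable def rotationEquiv {n : ℕ} (hN : k * n + 1 = N) :
    {R : Finset (Fin N) // #R = n ∧ Dominates k R univ} × Fin N ≃
      {T : Finset (Fin N) // #T = n} :=
  Equiv.ofBijective (fun p => ⟨p.2 +ᵥ p.1.1, by rw [card_vadd_finset, p.1.2.1]⟩) <| by
    constructor
    · rintro ⟨⟨R, hR, hRd⟩, c⟩ ⟨⟨R', hR', hRd'⟩, c'⟩ h
      have hT : c +ᵥ R = c' +ᵥ R' := congrArg Subtype.val h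
      have hc : (c : ℕ) = c' := by
        refine eq_of_forall_walk_le (T := c +ᵥ R) (by rw [card_vadd_finset, hR, hN]) c.2 c'.2
          ((dominates_neg_vadd_iff c).1 (by rwa [neg_vadd_vadd]))
          ((dominates_neg_vadd_iff c').1 ?_)
        rwa [hT, neg_vadd_vadd]
      obtain rfl : c = c' := Fin.ext hc
      obtain rfl : R = R' := AddAction.injective c hT
      rfl
    · rintro ⟨T, hT⟩
      obtain ⟨c, hc, hgood⟩ := exists_forall_walk_le (k := k) (T := T) (by rw [hT, hN])
      refine ⟨⟨⟨-(c : Fin N) +ᵥ T, by rw [card_vadd_finset, hT], ?_⟩, c⟩, ?_⟩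
      · rw [dominates_neg_vadd_iff, Fin.val_natCast, Nat.mod_eq_of_lt hc]
        exact hgood
      · exact Subtype.ext (vadd_neg_vadd _ _)

end CycleLemma

theorem dominates_map_castSuccEmb_iff {m k : ℕ} {S : Finset (Fin m)} :
    Dominates k (S.map Fin.castSuccEmb) univ ↔ Dominates k S univ ∧ m ≤ k * #S := by
  have hlast : {x ∈ S.map Fin.castSuccEmb | x < Fin.last m} = S.map Fin.castSuccEmb :=
    filter_true_of_mem fun x hx => by
      obtain ⟨y, -, rfl⟩ := mem_map.1 hx
      exact Fin.castSucc_lt_last y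
  simp only [Dominates, Fin.forall_fin_succ', filter_gt_eq_Iio, Fin.card_Iio, Fin.val_castSucc,
    Fin.val_last, hlast, card_map]
  simp only [filter_map, card_map, Function.comp_def, Fin.coe_castSuccEmb,
    Fin.castSucc_lt_castSucc_iff]

noncomputable def dominatingCastSuccEquiv {k n : ℕ} (hk : 0 < k) :
    {S : Finset (Fin (k * n)) // #S = n ∧ Dominates k S univ} ≃
      {R : Finset (Fin (k * n + 1)) // #R = n ∧ Dominates k R univ} :=
  Equiv.ofBijective (fun S => ⟨S.1.map Fin.castSuccEmb, by rw [card_map, S.2.1],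
      dominates_map_castSuccEmb_iff.2 ⟨S.2.2, by rw [S.2.1]⟩⟩) <| by
    refine ⟨fun S S' h => Subtype.ext (map_injective _ (congrArg Subtype.val h)), ?_⟩
    rintro ⟨R, hR, hRd⟩
    have hlast : Fin.last (k * n) ∉ R := by
      have h := hRd (Fin.last _)
      rw [filter_gt_eq_Iio, Fin.card_Iio, Fin.val_last] at h
      have hall : {x ∈ R | x < Fin.last _} = R := eq_of_subset_of_card_le (filter_subset _ _)
        (by rw [hR]; exact Nat.le_of_mul_le_mul_left h hk)
      intro hmem
      rw [← hall] at hmem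
      exact lt_irrefl _ (mem_filter.1 hmem).2
    obtain ⟨S, -, rfl⟩ := subset_map_iff.1 (show R ⊆ univ.map Fin.castSuccEmb from fun x hx =>
      mem_map.2 ((Fin.exists_castSucc_eq.2 (ne_of_mem_of_not_mem hx hlast)).elim
        fun j hj => ⟨j, mem_univ j, hj⟩))
    rw [card_map] at hR
    exact ⟨⟨S, hR, (dominates_map_castSuccEmb_iff.1 hRd).1⟩, rfl⟩

theorem card_dominating_mul {k : ℕ} (hk : 0 < k) (n : ℕ) :
    Nat.card {S : Finset (Fin (k * n)) // #S = n ∧ Dominates k S univ} * (k * n + 1) =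
      (k * n + 1).choose n := by
  have h := Nat.card_congr (rotationEquiv k (n := n) rfl)
  rw [Nat.card_prod, Nat.card_eq_fintype_card (α := Fin _), Fintype.card_fin,
    Nat.card_eq_fintype_card (α := {T : Finset _ // #T = n}), Fintype.card_finset_len,
    Fintype.card_fin] at h
  rw [Nat.card_congr (dominatingCastSuccEquiv hk), h]

theorem eq_choose_div_of_mul_eq {k n a : ℕ} (hk : 0 < k)
    (h : a * (k * n + 1) = (k * n + 1).choose n) : a = (k * n).choose n / ((k - 1) * n + 1) := by
  have hkn : (k - 1) * n + 1 = k * n + 1 - n := by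
    rw [Nat.sub_mul, one_mul]
    have := Nat.le_mul_of_pos_left n hk
    omega
  have hchoose := Nat.choose_mul_succ_eq (k * n) n
  rw [← h, mul_right_comm, Nat.mul_left_inj (Nat.succ_ne_zero _)] at hchoose
  rw [hkn, hchoose, Nat.mul_div_cancel _ (by rw [← hkn]; exact Nat.succ_pos _)]

theorem card_nonCrossing_kEqual {k : ℕ} (hk : 0 < k) (n : ℕ) :
    Nat.card {P : NCP (k * n) // IsNonCrossing P ∧ IsKEqual k P} =
      Nat.card {S : Finset (Fin (k * n)) // #S = n ∧ Dominates k S univ} := by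
  refine Nat.card_congr ((Equiv.subtypeEquivRight fun P => ?_).trans
    ((Finpartition.openersEquiv hk univ).trans (Equiv.subtypeEquivRight fun S => ?_)))
  · simp only [IsNonCrossing, Finpartition.NonCrossing, pRel, Finpartition.mem_part_iff_exists,
      IsKEqual]
  · simp [Nat.mul_left_cancel_iff hk, eq_comm]

theorem stmt0_general (k n : ℕ) (hk : 0 < k) :
    Nat.card {P : NCP (k * n) // IsNonCrossing P ∧ IsKEqual k P} =
      (k * n).choose n / ((k - 1) * n + 1) := by
  refine eq_choose_div_of_mul_eq hk ?_
  rw [card_nonCrossing_kEqual hk n, card_dominating_mul hk n]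

/-- The number of `k`-equal non-crossing partitions of `{1,…,kn}` is
`binom(kn, n) / ((k-1)n + 1)`. -/
theorem stmt0 (k n : ℕ) (hk : 0 < k) (hn : 0 < n) :
    Nat.card {P : NCP (k * n) // IsNonCrossing P ∧ IsKEqual k P} =
      (k * n).choose n / ((k - 1) * n + 1) :=
  stmt0_general k n hk
end

section
/- The number of non-crossing partitions of the set {1,...,kn} in which every block has size divisible by k equals binom((k+1)n, n) / (kn + 1). -/
open scoped BigOperators Classical

/-!
Encode a partition of `{0, …, m - 1}` by the sequence `s` with `s i = #B / k` when `i` is the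
minimum of the block `B`, and `s i = 0` otherwise. A non-crossing partition is recovered from `s`
greedily: an element that is not a block minimum joins the most recently opened block that still
has room. For a `k`-divisible partition, `s` satisfies `k * ∑ s = m` and the ballot condition
`k * (s 0 + ⋯ + s i) ≥ i + 1` for `i < m`, and every such sequence arises. Appending a zero turns
these into tuples `g : Fin (m + 1) → ℕ`, and by the cycle lemma exactly one of the `m + 1`
rotations of a tuple with `k * ∑ g = m` is a ballot sequence. For `m = k * n` there are
`binom((k + 1) n, n)` such tuples.
-/

lemma Finpartition.eq_of_part_eq {α : Type*} [DecidableEq α] {u : Finset α}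
    {P Q : Finpartition u} (h : ∀ a ∈ u, P.part a = Q.part a) : P = Q := by
  suffices ∀ {P Q : Finpartition u}, (∀ a ∈ u, P.part a = Q.part a) → P.parts ⊆ Q.parts from
    Finpartition.ext (Finset.Subset.antisymm (this h) (this fun a ha => (h a ha).symm))
  intro P Q h t ht
  obtain ⟨a, ha⟩ := P.nonempty_of_mem_parts ht
  have hau : a ∈ u := P.le ht ha
  rw [← P.part_eq_of_mem ht ha, h a hau]
  exact Q.part_mem.2 hau

namespace KDivisibleNC

open Finset Fin.NatCast

lemma range_eq_map_val {N c : ℕ} (hc : c ≤ N) :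
    range c = ({y | (y : ℕ) < c} : Finset (Fin N)).map Fin.valEmbedding := by
  ext j
  simp only [mem_range, mem_map, mem_filter, mem_univ, true_and, Fin.valEmbedding_apply]
  exact ⟨fun h => ⟨⟨j, by omega⟩, h, rfl⟩, by rintro ⟨y, hy, rfl⟩; exact hy⟩

def IsBallot (k m : ℕ) (s : ℕ → ℕ) : Prop :=
  ∀ i < m, i + 1 ≤ k * ∑ j ∈ range (i + 1), s j

lemma isBallot_congr {k m : ℕ} {s s' : ℕ → ℕ} (h : ∀ i < m, s i = s' i)
    (hs : IsBallot k m s) : IsBallot k m s' := by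
  intro i hi
  rw [← sum_congr rfl fun j hj => h j ((mem_range.1 hj).trans_le hi)]
  exact hs i hi

lemma le_mul_sum_of_isBallot {k m : ℕ} {s : ℕ → ℕ} (hs : IsBallot k m s) :
    m ≤ k * ∑ j ∈ range m, s j := by
  cases m with
  | zero => exact Nat.zero_le _
  | succ m => exact hs m (lt_add_one m)

section CycleLemma

variable {k m : ℕ}

-- `(j : Fin (m + 1))` is `j % (m + 1)`, so `fun j : ℕ => g j` is the periodic extension of `g`.
lemma sum_univ_eq_sum_range_cast (g : Fin (m + 1) → ℕ) :
    ∑ i, g i = ∑ j ∈ range (m + 1), g (j : Fin (m + 1)) := by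
  rw [← Fin.sum_univ_eq_sum_range (fun j => g j)]
  simp

def rotate (r : Fin (m + 1)) (g : Fin (m + 1) → ℕ) : Fin (m + 1) → ℕ := fun i => g (r + i)

def height (k : ℕ) (g : Fin (m + 1) → ℕ) (t : ℕ) : ℤ :=
  k * ∑ j ∈ range t, g (j : Fin (m + 1)) - t

@[simp]
lemma rotate_zero (g : Fin (m + 1) → ℕ) : rotate 0 g = g := by
  funext i; simp [rotate]

lemma rotate_rotate (a b : Fin (m + 1)) (g : Fin (m + 1) → ℕ) :
    rotate a (rotate b g) = rotate (b + a) g := by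
  funext i; simp [rotate, add_assoc]

lemma sum_rotate (r : Fin (m + 1)) (g : Fin (m + 1) → ℕ) : ∑ i, rotate r g i = ∑ i, g i :=
  Equiv.sum_comp (Equiv.addLeft r) g

lemma sum_range_add_rotate (r : Fin (m + 1)) (g : Fin (m + 1) → ℕ) (t : ℕ) :
    ∑ j ∈ range (r + t), g (j : Fin (m + 1)) =
      ∑ j ∈ range r, g (j : Fin (m + 1)) + ∑ j ∈ range t, rotate r g (j : Fin (m + 1)) := by
  simp [sum_range_add, rotate]

lemma sum_range_add_period (g : Fin (m + 1) → ℕ) (t : ℕ) :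
    ∑ j ∈ range (t + (m + 1)), g (j : Fin (m + 1)) =
      ∑ j ∈ range t, g (j : Fin (m + 1)) + ∑ i, g i := by
  rw [add_comm, sum_range_add, add_comm, sum_univ_eq_sum_range_cast]
  simp

lemma height_add_period {g : Fin (m + 1) → ℕ} (hs : k * ∑ i, g i = m) (t : ℕ) :
    height k g (t + (m + 1)) = height k g t - 1 := by
  have : (k : ℤ) * ∑ i, (g i : ℤ) = m := by exact_mod_cast hs
  simp only [height, sum_range_add_period]
  push_cast
  linarith

lemma isBallot_rotate_iff (r : Fin (m + 1)) (g : Fin (m + 1) → ℕ) :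
    IsBallot k m (fun j => rotate r g j) ↔
      ∀ t, (r : ℕ) < t → t ≤ r + m → height k g r ≤ height k g t := by
  have hstep : ∀ i, (i + 1 ≤ k * ∑ j ∈ range (i + 1), rotate r g j ↔
      height k g r ≤ height k g (r + (i + 1))) := by
    intro i
    rw [height, height, sum_range_add_rotate, ← Int.ofNat_le]
    push_cast
    constructor <;> intro h <;> linarith
  constructor
  · intro h t hrt htm
    obtain ⟨i, rfl⟩ : ∃ i, t = r + (i + 1) := ⟨t - r - 1, by omega⟩
    exact (hstep i).1 (h i (by omega))
  · intro h i hi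
    exact (hstep i).2 (h _ (by omega) (by omega))

/-- The rotation starting at the first minimum of the height on `[0, m]` is a ballot sequence:
beyond `m` the height is one less than a value taken strictly before that minimum. -/
lemma exists_isBallot_rotate {g : Fin (m + 1) → ℕ} (hs : k * ∑ i, g i = m) :
    ∃ r : Fin (m + 1), IsBallot k m (fun j => rotate r g j) := by
  have hex : ∃ r, r ≤ m ∧ ∀ t ≤ m, height k g r ≤ height k g t := by
    obtain ⟨r, hr, hmin⟩ := (range (m + 1)).exists_min_image (height k g) ⟨0, by simp⟩
    exact ⟨r, Nat.lt_succ_iff.1 (mem_range.1 hr), fun t ht => hmin t (by simp; omega)⟩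
  obtain ⟨hrm, hrmin⟩ := Nat.find_spec hex
  have hbefore : ∀ t < Nat.find hex, height k g (Nat.find hex) < height k g t := by
    intro t ht
    have : ¬ (t ≤ m ∧ _) := Nat.find_min hex ht
    simp only [not_and, not_forall, not_le] at this
    obtain ⟨t', ht'm, hlt⟩ := this (by omega)
    exact (hrmin t' ht'm).trans_lt hlt
  refine ⟨⟨Nat.find hex, by omega⟩, (isBallot_rotate_iff _ _).2 fun t hrt htr => ?_⟩
  rcases le_or_gt t m with htm | htm
  · exact hrmin t htm
  · obtain ⟨t', rfl⟩ : ∃ t', t = t' + (m + 1) := ⟨t - (m + 1), by omega⟩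
    simp only at hrt htr ⊢
    have := hbefore t' (by omega)
    rw [height_add_period hs]
    omega

lemma eq_of_isBallot_rotate {g : Fin (m + 1) → ℕ} (hs : k * ∑ i, g i = m) {r r' : Fin (m + 1)}
    (h : IsBallot k m (fun j => rotate r g j)) (h' : IsBallot k m (fun j => rotate r' g j)) :
    r = r' := by
  have not_lt : ∀ a b : Fin (m + 1), IsBallot k m (fun j => rotate a g j) →
      IsBallot k m (fun j => rotate b g j) → ¬ a < b := by
    intro a b ha hb hab
    rw [isBallot_rotate_iff] at ha hb
    -- `height a ≤ height b ≤ height (a + (m + 1)) = height a - 1`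
    have h1 := ha b hab (by omega)
    have h2 := hb (a + (m + 1)) (by omega) (by omega)
    rw [height_add_period hs] at h2
    omega
  exact le_antisymm (le_of_not_gt (not_lt r' r h' h)) (le_of_not_gt (not_lt r r' h h'))

variable (k m) in
abbrev BallotTuple : Type :=
  {g : Fin (m + 1) → ℕ // k * ∑ i, g i = m ∧ IsBallot k m (fun j => g j)}

lemma card_ballotTuple_mul (k m : ℕ) :
    Nat.card (BallotTuple k m) * (m + 1) =
      Nat.card {g : Fin (m + 1) → ℕ // k * ∑ i, g i = m} := by
  let f : BallotTuple k m × Fin (m + 1) → {g : Fin (m + 1) → ℕ // k * ∑ i, g i = m} :=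
    fun p => ⟨rotate p.2 p.1.1, by rw [sum_rotate]; exact p.1.2.1⟩
  have hf : Function.Bijective f := by
    constructor
    · rintro ⟨⟨g, hgs, hg⟩, r⟩ ⟨⟨g', hgs', hg'⟩, r'⟩ heq
      have hrot : rotate r g = rotate r' g' := congrArg Subtype.val heq
      have hg'r : g' = rotate (r + -r') g := by
        rw [← rotate_rotate, hrot, rotate_rotate, add_neg_cancel, rotate_zero]
      have hr : r + -r' = 0 := by
        refine eq_of_isBallot_rotate hgs ?_ (by rwa [rotate_zero])
        rwa [← hg'r]
      obtain rfl : r = r' := by rwa [← sub_eq_add_neg, sub_eq_zero] at hr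
      obtain rfl : g' = g := by rw [hg'r, hr, rotate_zero]
      rfl
    · rintro ⟨g, hgs⟩
      obtain ⟨r, hr⟩ := exists_isBallot_rotate hgs
      refine ⟨(⟨rotate r g, by rwa [sum_rotate], hr⟩, -r), Subtype.ext ?_⟩
      simp [f, rotate_rotate]
  rw [← Nat.card_congr (Equiv.ofBijective f hf), Nat.card_prod, Nat.card_fin]

lemma card_tuples_sum_eq (N n : ℕ) :
    Nat.card {g : Fin N → ℕ // ∑ i, g i = n} = (N + n - 1).choose n := by
  rw [← Nat.card_congr (Sym.equivNatSumOfFintype (Fin N) n), Nat.card_eq_fintype_card,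
    Sym.card_sym_eq_choose, Fintype.card_fin]

lemma card_ballotTuple (hk : 0 < k) (n : ℕ) :
    Nat.card (BallotTuple k (k * n)) = ((k + 1) * n).choose n / (k * n + 1) := by
  have hall : Nat.card {g : Fin (k * n + 1) → ℕ // k * ∑ i, g i = k * n} =
      ((k + 1) * n).choose n := by
    rw [Nat.card_congr (Equiv.subtypeEquivRight fun g => Nat.mul_right_inj hk.ne'),
      card_tuples_sum_eq]
    congr 1
    lia
  rw [← hall, ← card_ballotTuple_mul, Nat.mul_div_cancel _ (Nat.succ_pos _)]

end CycleLemma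

section Greedy

variable (k : ℕ) (s : ℕ → ℕ)

-- `fill j` is the number of elements already in the block opened at `j`; that block is meant to
-- receive `k * s j` elements.
def nextLeader (fill : ℕ → ℕ) (i : ℕ) : ℕ :=
  if 0 < s i then i else Nat.findGreatest (fun j => fill j < k * s j) i

def fillCount : ℕ → ℕ → ℕ
  | 0 => fun _ => 0
  | i + 1 => fun j => fillCount i j + if nextLeader k s (fillCount i) i = j then 1 else 0

def leader (i : ℕ) : ℕ := nextLeader k s (fillCount k s i) i

variable {k s} {m : ℕ}

lemma fillCount_succ (i j : ℕ) :
    fillCount k s (i + 1) j = fillCount k s i j + if leader k s i = j then 1 else 0 := rfl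

lemma leader_of_pos {i : ℕ} (h : 0 < s i) : leader k s i = i := if_pos h

lemma leader_le (i : ℕ) : leader k s i ≤ i := by
  unfold leader nextLeader
  split_ifs
  exacts [le_rfl, Nat.findGreatest_le i]

lemma fillCount_eq_card (i j : ℕ) : fillCount k s i j = #{t ∈ range i | leader k s t = j} := by
  induction i with
  | zero => rfl
  | succ i ih =>
    rw [fillCount_succ, ih, range_add_one, filter_insert]
    split_ifs with h
    · rw [card_insert_of_notMem (by simp)]
    · rfl

lemma fillCount_mono {i i' : ℕ} (h : i ≤ i') (j : ℕ) :
    fillCount k s i j ≤ fillCount k s i' j := by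
  simp only [fillCount_eq_card]
  exact card_le_card (filter_subset_filter _ (range_subset_range.2 h))

lemma sum_fillCount {i c : ℕ} (h : i ≤ c) : ∑ j ∈ range c, fillCount k s i j = i := by
  simp only [fillCount_eq_card]
  rw [← card_eq_sum_card_fiberwise fun t ht => ?_, card_range]
  exact mem_range.2 (((leader_le t).trans_lt (mem_range.1 ht)).trans_le h)

lemma fillCount_le_of_forall_lt {i : ℕ}
    (h : ∀ t < i, fillCount k s t (leader k s t) < k * s (leader k s t)) (j : ℕ) :
    fillCount k s i j ≤ k * s j := by
  induction i with
  | zero => exact Nat.zero_le _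
  | succ i ih =>
    rw [fillCount_succ]
    split_ifs with hj
    · subst hj; exact h i (by omega)
    · rw [add_zero]
      exact ih fun t ht => h t (by omega)

/-- If `s i = 0`, only `i` of the `k * (s 0 + ⋯ + s i) > i` places in the blocks opened at
`j ≤ i` are taken, so one of them still has room. -/
lemma fillCount_leader_lt (hk : 0 < k) (hs : IsBallot k m s) {i : ℕ} (hi : i < m) :
    fillCount k s i (leader k s i) < k * s (leader k s i) := by
  by_cases hpos : 0 < s i
  · rw [leader_of_pos hpos, fillCount_eq_card, card_eq_zero.2]
    · exact Nat.mul_pos hk hpos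
    · exact filter_eq_empty_iff.2 fun t ht => ((leader_le t).trans_lt (mem_range.1 ht)).ne
  · have hlt : ∑ j ∈ range (i + 1), fillCount k s i j < ∑ j ∈ range (i + 1), k * s j := by
      rw [sum_fillCount (Nat.le_succ i), ← mul_sum]
      exact hs i hi
    obtain ⟨j, hj, hjlt⟩ := exists_lt_of_sum_lt hlt
    unfold leader nextLeader
    rw [if_neg hpos]
    exact Nat.findGreatest_spec (P := fun j => fillCount k s i j < k * s j)
      (Nat.lt_succ_iff.1 (mem_range.1 hj)) hjlt

lemma pos_at_leader (hk : 0 < k) (hs : IsBallot k m s) {i : ℕ} (hi : i < m) :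
    0 < s (leader k s i) :=
  Nat.pos_of_mul_pos_left (Nat.zero_lt_of_lt (fillCount_leader_lt hk hs hi))

lemma leader_leader (hk : 0 < k) (hs : IsBallot k m s) {i : ℕ} (hi : i < m) :
    leader k s (leader k s i) = leader k s i :=
  leader_of_pos (pos_at_leader hk hs hi)

lemma fillCount_eq_mul (hk : 0 < k) (hs : IsBallot k m s) (hsum : k * ∑ j ∈ range m, s j = m)
    {j : ℕ} (hj : j < m) : fillCount k s m j = k * s j := by
  have hle : ∀ j ∈ range m, fillCount k s m j ≤ k * s j := fun j _ =>
    fillCount_le_of_forall_lt (fun t ht => fillCount_leader_lt hk hs ht) j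
  refine (sum_eq_sum_iff_of_le hle).1 ?_ j (mem_range.2 hj)
  rw [sum_fillCount le_rfl, ← mul_sum, hsum]

lemma leader_le_leader (hk : 0 < k) (hs : IsBallot k m s) {t t' : ℕ} (htt' : t < t')
    (ht' : t' < m) (hle : leader k s t' ≤ t) : leader k s t' ≤ leader k s t := by
  by_cases hpos : 0 < s t
  · rwa [leader_of_pos hpos]
  · unfold leader nextLeader
    rw [if_neg hpos]
    exact Nat.le_findGreatest hle
      ((fillCount_mono htt'.le _).trans_lt (fillCount_leader_lt hk hs ht'))

end Greedy

lemma pRel_iff_mem_part {N : ℕ} (P : NCP N) (x y : Fin N) : pRel P x y ↔ x ∈ P.part y :=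
  P.mem_part_iff_exists.symm

section OfLeaders

variable {k m : ℕ} {s : ℕ → ℕ}

variable (k m s) in
noncomputable def ofLeaders : NCP m :=
  Finpartition.ofSetoid (Setoid.ker fun x : Fin m => leader k s x)

lemma mem_part_ofLeaders {x y : Fin m} :
    y ∈ (ofLeaders k m s).part x ↔ leader k s y = leader k s x :=
  Finpartition.mem_part_ofSetoid_iff_rel.trans eq_comm

lemma card_part_ofLeaders (x : Fin m) :
    #((ofLeaders k m s).part x) = fillCount k s m (leader k s x) := by
  have : (ofLeaders k m s).part x = ({y | leader k s y = leader k s x} : Finset (Fin m)) := by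
    ext y; simp [mem_part_ofLeaders]
  rw [this, card_filter, fillCount_eq_card, card_filter,
    Fin.sum_univ_eq_sum_range (fun t => if leader k s t = leader k s x then 1 else 0)]

lemma isNonCrossing_ofLeaders (hk : 0 < k) (hs : IsBallot k m s) :
    IsNonCrossing (ofLeaders k m s) := by
  intro a b c d hab hbc hcd hac hbd
  simp only [pRel_iff_mem_part, mem_part_ofLeaders, Fin.lt_def] at *
  have hdc : leader k s d ≤ leader k s c :=
    leader_le_leader hk hs hcd d.isLt (hbd ▸ (leader_le _).trans hbc.le)
  have hcb : leader k s c ≤ leader k s b :=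
    leader_le_leader hk hs hbc c.isLt (hac ▸ (leader_le _).trans hab.le)
  omega

lemma isKDivisible_ofLeaders (hk : 0 < k) (hs : IsBallot k m s)
    (hsum : k * ∑ j ∈ range m, s j = m) : IsKDivisible k (ofLeaders k m s) := by
  intro t ht
  obtain ⟨x, hx⟩ := (ofLeaders k m s).nonempty_of_mem_parts ht
  rw [← (ofLeaders k m s).part_eq_of_mem ht hx, card_part_ofLeaders,
    fillCount_eq_mul hk hs hsum ((leader_le x).trans_lt x.isLt)]
  exact dvd_mul_right _ _

end OfLeaders

section BlockMin

variable {N : ℕ} (P : NCP N)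

noncomputable def blockMin (x : Fin N) : Fin N :=
  (P.part x).min' ⟨x, P.mem_part (mem_univ x)⟩

lemma blockMin_mem_part (x : Fin N) : blockMin P x ∈ P.part x := min'_mem _ _

lemma blockMin_le (x : Fin N) : blockMin P x ≤ x := min'_le _ _ (P.mem_part (mem_univ x))

lemma part_blockMin (x : Fin N) : P.part (blockMin P x) = P.part x :=
  P.part_eq_of_mem (P.part_mem.2 (mem_univ x)) (blockMin_mem_part P x)

lemma mem_part_iff_blockMin_eq {x y : Fin N} : y ∈ P.part x ↔ blockMin P y = blockMin P x := by
  rw [P.mem_part_iff_part_eq_part (mem_univ y) (mem_univ x)]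
  refine ⟨fun h => by simp only [blockMin, h], fun h => ?_⟩
  rw [← part_blockMin P x, ← h, part_blockMin]

lemma blockMin_blockMin (x : Fin N) : blockMin P (blockMin P x) = blockMin P x :=
  (mem_part_iff_blockMin_eq P).1 (blockMin_mem_part P x)

lemma pRel_iff_blockMin_eq {x y : Fin N} : pRel P x y ↔ blockMin P x = blockMin P y := by
  rw [pRel_iff_mem_part, mem_part_iff_blockMin_eq]

lemma filter_blockMin_eq {y : Fin N} (hy : blockMin P y = y) :
    ({x | blockMin P x = y} : Finset (Fin N)) = P.part y := by
  ext x
  rw [mem_filter, mem_part_iff_blockMin_eq, hy]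
  simp

/-- Otherwise the block of `w` would cross the block of `x`. -/
lemma lt_of_mem_part_of_blockMin_lt (hP : IsNonCrossing P) {x w e : Fin N}
    (hxw : blockMin P x < w) (hwx : w < x) (hw : blockMin P w = w) (he : e ∈ P.part w) :
    e < x := by
  by_contra! hex
  have hxe : x ≠ e := by
    rintro rfl
    rw [mem_part_iff_blockMin_eq, hw] at he
    exact hxw.ne he
  have hcross := hP _ _ _ _ hxw hwx (lt_of_le_of_ne hex hxe)
    ((pRel_iff_blockMin_eq P).2 (blockMin_blockMin P x))
    ((pRel_iff_blockMin_eq P).2 ((mem_part_iff_blockMin_eq P).1 he).symm)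
  rw [pRel_iff_blockMin_eq, blockMin_blockMin, hw] at hcross
  exact hxw.ne hcross

end BlockMin

section BlockSeq

variable {k N : ℕ} (P : NCP N)

variable (k) in
noncomputable def blockSeq (i : ℕ) : ℕ :=
  if h : i < N then
    if blockMin P ⟨i, h⟩ = ⟨i, h⟩ then #(P.part ⟨i, h⟩) / k else 0
  else 0

lemma blockSeq_of_le {i : ℕ} (h : N ≤ i) : blockSeq k P i = 0 := dif_neg (by omega)

lemma blockSeq_val (x : Fin N) :
    blockSeq k P x = if blockMin P x = x then #(P.part x) / k else 0 := dif_pos x.isLt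

lemma mul_blockSeq (hP : IsKDivisible k P) (x : Fin N) :
    k * blockSeq k P x = if blockMin P x = x then #(P.part x) else 0 := by
  rw [blockSeq_val]
  split_ifs
  exacts [Nat.mul_div_cancel' (hP _ (P.part_mem.2 (mem_univ x))), rfl]

lemma blockMin_eq_of_blockSeq_pos {x : Fin N} (h : 0 < blockSeq k P x) : blockMin P x = x := by
  by_contra hx
  rw [blockSeq_val, if_neg hx] at h
  exact h.false

lemma blockSeq_pos (hP : IsKDivisible k P) {x : Fin N} (hx : blockMin P x = x) :
    0 < blockSeq k P x := by
  have h := mul_blockSeq P hP x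
  rw [if_pos hx] at h
  exact Nat.pos_of_mul_pos_left (h ▸ card_pos.2 ⟨x, P.mem_part (mem_univ x)⟩)

lemma mul_sum_range_blockSeq (hP : IsKDivisible k P) {c : ℕ} (hc : c ≤ N) :
    k * ∑ j ∈ range c, blockSeq k P j =
      ∑ y ∈ univ.filter fun y : Fin N => (y : ℕ) < c ∧ blockMin P y = y, #(P.part y) := by
  rw [range_eq_map_val hc, sum_map, mul_sum]
  simp only [Fin.valEmbedding_apply, mul_blockSeq P hP]
  rw [sum_ite, sum_const_zero, add_zero, filter_filter]

lemma mul_sum_blockSeq (hP : IsKDivisible k P) : k * ∑ j ∈ range N, blockSeq k P j = N := by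
  rw [mul_sum_range_blockSeq P hP le_rfl]
  conv_rhs => rw [← Fintype.card_fin N, ← card_univ,
    card_eq_sum_card_fiberwise (f := blockMin P)
      (t := univ.filter fun y : Fin N => (y : ℕ) < N ∧ blockMin P y = y)
      fun x _ => by simp [blockMin_blockMin]]
  refine sum_congr rfl fun y hy => ?_
  rw [← filter_blockMin_eq P (mem_filter.1 hy).2.2]

lemma isBallot_blockSeq (hP : IsKDivisible k P) : IsBallot k N (blockSeq k P) := by
  intro i hi
  rw [mul_sum_range_blockSeq P hP hi]
  calc i + 1 = #({x | (x : ℕ) < i + 1} : Finset (Fin N)) := by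
        rw [← card_map Fin.valEmbedding, ← range_eq_map_val hi, card_range]
    _ = ∑ y ∈ univ.filter fun y : Fin N => (y : ℕ) < i + 1 ∧ blockMin P y = y,
          #({x | (x : ℕ) < i + 1 ∧ blockMin P x = y} : Finset (Fin N)) := by
        rw [card_eq_sum_card_fiberwise (f := blockMin P)
          (t := univ.filter fun y : Fin N => (y : ℕ) < i + 1 ∧ blockMin P y = y) fun x hx => ?_]
        · simp [filter_filter]
        · simp only [coe_filter, mem_univ, true_and, Set.mem_ofPred_eq] at hx ⊢
          exact ⟨(Fin.le_def.1 (blockMin_le P x)).trans_lt hx, blockMin_blockMin P x⟩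
    _ ≤ _ := sum_le_sum fun y hy => card_le_card fun x hx => by
        rw [← filter_blockMin_eq P (mem_filter.1 hy).2.2]
        simp only [mem_filter] at hx ⊢
        exact ⟨hx.1, hx.2.2⟩

end BlockSeq

section RoundTrip

variable {k N : ℕ} {s : ℕ → ℕ} {P : NCP N}

lemma fillCount_eq_card_filter_part {v : ℕ} (hv : v ≤ N)
    (hlead : ∀ x : Fin N, (x : ℕ) < v → leader k s x = blockMin P x)
    {y : Fin N} (hy : blockMin P y = y) :
    fillCount k s v y = #((P.part y).filter fun e : Fin N => (e : ℕ) < v) := by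
  rw [fillCount_eq_card, range_eq_map_val hv, filter_map, card_map, filter_filter]
  congr 1
  ext e
  simp only [mem_filter, mem_univ, true_and, Function.comp_apply, Fin.valEmbedding_apply]
  constructor
  · rintro ⟨he, hey⟩
    rw [hlead e he, Fin.val_inj, ← hy] at hey
    exact ⟨(mem_part_iff_blockMin_eq P).2 hey, he⟩
  · rintro ⟨hey, he⟩
    rw [hlead e he, Fin.val_inj, (mem_part_iff_blockMin_eq P).1 hey, hy]
    exact ⟨he, rfl⟩

lemma leader_eq_blockMin (hNC : IsNonCrossing P) (hP : IsKDivisible k P)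
    (hs : ∀ i < N, s i = blockSeq k P i) (x : Fin N) : leader k s x = blockMin P x := by
  induction x using WellFoundedLT.induction with
  | _ x ih =>
  by_cases hx : blockMin P x = x
  · rw [hx]
    exact leader_of_pos (hs x x.isLt ▸ blockSeq_pos P hP hx)
  have hjx : blockMin P x < x := lt_of_le_of_ne (blockMin_le P x) hx
  have hsx : ¬ 0 < s x := by
    rw [hs x x.isLt]
    exact fun h => hx (blockMin_eq_of_blockSeq_pos P h)
  have hjj := blockMin_blockMin P x
  unfold leader nextLeader
  rw [if_neg hsx, Nat.findGreatest_eq_iff]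
  refine ⟨Fin.le_def.1 hjx.le, fun _ => ?_, fun w hjw hwx hw => ?_⟩
  -- the block of `x` still has room, since `x` itself is not counted yet
  · rw [fillCount_eq_card_filter_part x.isLt.le ih hjj, hs _ (blockMin P x).isLt,
      mul_blockSeq P hP, if_pos hjj, part_blockMin]
    exact card_lt_card (filter_ssubset.2 ⟨x, P.mem_part (mem_univ x), lt_irrefl _⟩)
  -- a block opened between `blockMin P x` and `x` is already full
  · obtain ⟨w, rfl⟩ : ∃ w' : Fin N, (w' : ℕ) = w := ⟨⟨w, hwx.trans_lt x.isLt⟩, rfl⟩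
    rw [hs w w.isLt] at hw
    have hww : blockMin P w = w := blockMin_eq_of_blockSeq_pos P (Nat.pos_of_mul_pos_left
      (Nat.zero_lt_of_lt hw))
    have hwx' : w < x := lt_of_le_of_ne hwx fun h => hx (h ▸ hww)
    rw [fillCount_eq_card_filter_part x.isLt.le ih hww, mul_blockSeq P hP, if_pos hww,
      filter_true_of_mem (p := fun e : Fin N => (e : ℕ) < x)
        fun e he => lt_of_mem_part_of_blockMin_lt P hNC hjw hwx' hww he] at hw
    exact lt_irrefl _ hw

lemma ofLeaders_eq (hNC : IsNonCrossing P) (hP : IsKDivisible k P)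
    (hs : ∀ i < N, s i = blockSeq k P i) : ofLeaders k N s = P := by
  refine Finpartition.eq_of_part_eq fun x _ => ?_
  ext y
  rw [mem_part_ofLeaders, leader_eq_blockMin hNC hP hs, leader_eq_blockMin hNC hP hs,
      Fin.val_inj, mem_part_iff_blockMin_eq]

variable {m : ℕ}

lemma blockMin_ofLeaders (hk : 0 < k) (hs : IsBallot k m s) (x : Fin m) :
    (blockMin (ofLeaders k m s) x : ℕ) = leader k s x := by
  have hmem := blockMin_mem_part (ofLeaders k m s) x
  rw [mem_part_ofLeaders] at hmem
  refine le_antisymm ?_ (hmem ▸ leader_le _)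
  have hlt : leader k s x < m := (leader_le x).trans_lt x.isLt
  exact Fin.le_def.1 (min'_le _ ⟨_, hlt⟩
    (mem_part_ofLeaders.2 (leader_leader hk hs (Fin.isLt x))))

lemma blockSeq_ofLeaders (hk : 0 < k) (hs : IsBallot k m s) (hsum : k * ∑ j ∈ range m, s j = m)
    {i : ℕ} (hi : i < m) : blockSeq k (ofLeaders k m s) i = s i := by
  obtain ⟨x, rfl⟩ : ∃ x : Fin m, (x : ℕ) = i := ⟨⟨i, hi⟩, rfl⟩
  have hmin : blockMin (ofLeaders k m s) x = x ↔ 0 < s x := by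
    rw [Fin.ext_iff, blockMin_ofLeaders hk hs]
    exact ⟨fun h => h ▸ pos_at_leader hk hs x.isLt, leader_of_pos⟩
  rw [blockSeq_val]
  by_cases h : 0 < s x
  · rw [if_pos (hmin.2 h), card_part_ofLeaders, leader_of_pos h,
      fillCount_eq_mul hk hs hsum x.isLt, Nat.mul_div_cancel_left _ hk]
  · rw [if_neg (mt hmin.1 h)]
    omega

end RoundTrip

section Encoding

variable {k m : ℕ}

lemma mul_sum_range_of_isBallot (hk : 0 < k) {g : Fin (m + 1) → ℕ} (hg : k * ∑ i, g i = m)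
    (hb : IsBallot k m (fun j => g j)) :
    k * ∑ j ∈ range m, g (j : Fin (m + 1)) = m ∧ g (Fin.last m) = 0 := by
  rw [sum_univ_eq_sum_range_cast, sum_range_succ, Fin.natCast_eq_last, mul_add] at hg
  have hle := le_mul_sum_of_isBallot hb
  have hlast : k * g (Fin.last m) = 0 := by omega
  exact ⟨by omega, (Nat.mul_eq_zero.1 hlast).resolve_left hk.ne'⟩

lemma isBallot_blockSeq_cast {P : NCP m} (hP : IsKDivisible k P) :
    IsBallot k m (fun j => blockSeq k P ((j : Fin (m + 1)) : ℕ)) :=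
  isBallot_congr (fun i hi => by rw [Fin.val_natCast, Nat.mod_eq_of_lt (by omega)])
    (isBallot_blockSeq P hP)

lemma mul_sum_blockSeq_cast {P : NCP m} (hP : IsKDivisible k P) :
    k * ∑ i : Fin (m + 1), blockSeq k P i = m := by
  rw [Fin.sum_univ_eq_sum_range (blockSeq k P), sum_range_succ, blockSeq_of_le P le_rfl, add_zero,
    mul_sum_blockSeq P hP]

lemma blockSeq_ofLeaders_cast (hk : 0 < k) {g : Fin (m + 1) → ℕ} (hg : k * ∑ i, g i = m)
    (hb : IsBallot k m (fun j => g j)) (i : Fin (m + 1)) :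
    blockSeq k (ofLeaders k m (fun j => g j)) i = g i := by
  obtain ⟨hsum, hlast⟩ := mul_sum_range_of_isBallot hk hg hb
  by_cases hi : (i : ℕ) < m
  · rw [blockSeq_ofLeaders hk hb hsum hi, Fin.cast_val_eq_self]
  · obtain rfl : i = Fin.last m := Fin.ext (by have := i.isLt; simp; omega)
    rw [hlast, blockSeq_of_le _ (Fin.val_last m).ge]

variable (k m) in
noncomputable def nonCrossingKDivisibleEquivBallot (hk : 0 < k) :
    {P : NCP m // IsNonCrossing P ∧ IsKDivisible k P} ≃ BallotTuple k m where
  toFun P :=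
    ⟨fun i => blockSeq k P.1 i, mul_sum_blockSeq_cast P.2.2, isBallot_blockSeq_cast P.2.2⟩
  invFun g := ⟨ofLeaders k m (fun j => g.1 j), isNonCrossing_ofLeaders hk g.2.2,
    isKDivisible_ofLeaders hk g.2.2 (mul_sum_range_of_isBallot hk g.2.1 g.2.2).1⟩
  left_inv P := Subtype.ext <| ofLeaders_eq P.2.1 P.2.2 fun i hi => by
    simp only [Fin.val_natCast, Nat.mod_eq_of_lt (by omega : i < m + 1)]
  right_inv g := Subtype.ext <| funext <| blockSeq_ofLeaders_cast hk g.2.1 g.2.2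

end Encoding

end KDivisibleNC

open KDivisibleNC in
theorem stmt1_general (k n : ℕ) (hk : 0 < k) :
    Nat.card {P : NCP (k * n) // IsNonCrossing P ∧ IsKDivisible k P} =
      ((k + 1) * n).choose n / (k * n + 1) := by
  rw [Nat.card_congr (nonCrossingKDivisibleEquivBallot k (k * n) hk), card_ballotTuple hk n]

/-- The number of `k`-divisible non-crossing partitions of `{1,…,kn}` is
`binom((k+1)n, n) / (kn + 1)`. -/
theorem stmt1 (k n : ℕ) (hk : 0 < k) (hn : 0 < n) :
    Nat.card {P : NCP (k * n) // IsNonCrossing P ∧ IsKDivisible k P} =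
      ((k + 1) * n).choose n / (k * n + 1) :=
  stmt1_general k n hk
end

section
/- For every non-crossing partition pi of {1,...,n}, the number of blocks of pi plus the number of blocks of its Kreweras complement Kr(pi) equals n + 1. -/
/-!
Join consecutive elements of each block of `P` by arcs: a block of size `k` carries `k - 1` arcs,
so `P` has `n - #P` arcs. A point `g` of the complement sits between the points `g` and `g + 1`
of `P`. Two such points lie in one block of `Kr(P)` exactly when the same arcs pass over both:
an arc over one but not the other would be crossed, and grouping the points by the arcs over
them is itself compatible with `P`, hence is the largest such partition. As `P` is non-crossing,
the arcs over a point are nested, so such a set of arcs is either empty (over the last point) or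
determined by its innermost arc, which gives `#arcs + 1` blocks.
-/

open scoped BigOperators Classical

open Finset

theorem Finpartition.card_parts_eq_card_image {α β : Type*} [Fintype α] [DecidableEq α]
    [DecidableEq β] (Q : Finpartition (univ : Finset α)) (f : α → β)
    (h : ∀ x y, y ∈ Q.part x ↔ f x = f y) : #Q.parts = #(univ.image f) := by
  have hrep (t) (ht : t ∈ Q.parts) : Q.part (Q.nonempty_of_mem_parts ht).choose = t :=
    Q.part_eq_of_mem ht (Q.nonempty_of_mem_parts ht).choose_spec
  refine card_bij (fun t ht => f (Q.nonempty_of_mem_parts ht).choose)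
    (fun t _ => mem_image_of_mem f (mem_univ _)) (fun t₁ ht₁ t₂ ht₂ heq => ?_) fun b hb => ?_
  · rw [← hrep t₁ ht₁, ← hrep t₂ ht₂, ← Q.mem_part_iff_part_eq_part (mem_univ _) (mem_univ _),
      h, heq]
  · obtain ⟨x, -, rfl⟩ := mem_image.mp hb
    have hx : Q.part x ∈ Q.parts := Q.part_mem.mpr (mem_univ x)
    exact ⟨Q.part x, hx, ((h _ _).mp (Q.nonempty_of_mem_parts hx).choose_spec).symm⟩

namespace NCP

variable {n : ℕ}

lemma pRel_iff_mem_part {P : NCP n} {x y : Fin n} : pRel P x y ↔ y ∈ P.part x := by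
  rw [Finpartition.mem_part_iff_exists]
  exact ⟨fun ⟨t, ht, hx, hy⟩ => ⟨t, ht, hy, hx⟩, fun ⟨t, ht, hy, hx⟩ => ⟨t, ht, hx, hy⟩⟩

lemma pRel_symm {P : NCP n} {x y : Fin n} (h : pRel P x y) : pRel P y x := by
  obtain ⟨t, ht, hx, hy⟩ := h
  exact ⟨t, ht, hy, hx⟩

lemma part_eq_of_mem_part {P : NCP n} {x y : Fin n} (h : y ∈ P.part x) : P.part y = P.part x :=
  P.part_eq_of_mem (P.part_mem.mpr (mem_univ x)) h

def arcs (P : NCP n) : Finset (Fin n × Fin n) :=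
  univ.filter fun a => a.1 < a.2 ∧ a.2 ∈ P.part a.1 ∧ ∀ z ∈ P.part a.1, ¬(a.1 < z ∧ z < a.2)

lemma mem_arcs {P : NCP n} {a : Fin n × Fin n} :
    a ∈ P.arcs ↔ a.1 < a.2 ∧ a.2 ∈ P.part a.1 ∧ ∀ z ∈ P.part a.1, ¬(a.1 < z ∧ z < a.2) := by
  simp [arcs]

lemma eq_of_mem_arcs_of_fst_eq {P : NCP n} {a b : Fin n × Fin n} (ha : a ∈ P.arcs)
    (hb : b ∈ P.arcs) (h : a.1 = b.1) : a = b := by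
  obtain ⟨ha₁, ha₂, ha₃⟩ := mem_arcs.mp ha
  obtain ⟨hb₁, hb₂, hb₃⟩ := mem_arcs.mp hb
  rw [← h] at hb₁ hb₂ hb₃
  have hb_not_inside := ha₃ b.2 hb₂
  have ha_not_inside := hb₃ a.2 ha₂
  exact Prod.ext h (by omega)

lemma exists_arc_of_le_of_lt {P : NCP n} {x y g : Fin n} (hy : y ∈ P.part x) (hxg : x ≤ g)
    (hgy : g < y) : ∃ a ∈ P.arcs, x ≤ a.1 ∧ a.1 ≤ g ∧ g < a.2 ∧ a.2 ≤ y := by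
  have hx : x ∈ P.part x := P.mem_part (mem_univ x)
  obtain ⟨p, hp, hp_max⟩ := exists_max_image ((P.part x).filter (· ≤ g)) id
    ⟨x, by simp [hx, hxg]⟩
  obtain ⟨q, hq, hq_min⟩ := exists_min_image ((P.part x).filter (g < ·)) id
    ⟨y, by simp [hy, hgy]⟩
  simp only [mem_filter] at hp hq
  have hxp : x ≤ p := hp_max x (by simp [hx, hxg])
  have hqy : q ≤ y := hq_min y (by simp [hy, hgy])
  refine ⟨(p, q), mem_arcs.mpr ⟨hp.2.trans_lt hq.2, ?_, ?_⟩, hxp, hp.2, hq.2, hqy⟩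
  · rw [part_eq_of_mem_part hp.1]; exact hq.1
  · intro z hz ⟨hpz, hzq⟩
    rw [part_eq_of_mem_part hp.1] at hz
    rcases le_or_gt z g with hzg | hzg
    · exact absurd (hp_max z (by simp [hz, hzg])) (not_le.mpr hpz)
    · exact absurd (hq_min z (by simp [hz, hzg])) (not_le.mpr hzq)

lemma le_snd_of_mem_arcs {P : NCP n} (hP : IsNonCrossing P) {a b : Fin n × Fin n}
    (ha : a ∈ P.arcs) (hb : b ∈ P.arcs) (h₁ : b.1 ≤ a.1) (h₂ : a.1 < b.2) : a.2 ≤ b.2 := by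
  obtain ⟨ha₁, ha₂, ha₃⟩ := mem_arcs.mp ha
  obtain ⟨hb₁, hb₂, -⟩ := mem_arcs.mp hb
  rcases h₁.eq_or_lt with h₁ | h₁
  · rw [eq_of_mem_arcs_of_fst_eq ha hb h₁.symm]
  by_contra! h₃
  have hba : pRel P b.1 a.1 :=
    hP _ _ _ _ h₁ h₂ h₃ (pRel_iff_mem_part.mpr hb₂) (pRel_iff_mem_part.mpr ha₂)
  have hb₂' : b.2 ∈ P.part a.1 := by
    rwa [← part_eq_of_mem_part (pRel_iff_mem_part.mp hba)] at hb₂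
  exact ha₃ b.2 hb₂' ⟨h₂, h₃⟩

lemma image_fst_arcs_of_part_eq {P : NCP n} {t : Finset (Fin n)} (ht : t ∈ P.parts) :
    (P.arcs.filter fun a => P.part a.1 = t).image Prod.fst =
      t.erase (t.max' (P.nonempty_of_mem_parts ht)) := by
  ext x
  simp only [mem_image, mem_filter, mem_erase, P.part_eq_iff_mem ht]
  constructor
  · rintro ⟨a, ⟨ha, hat⟩, rfl⟩
    obtain ⟨ha₁, ha₂, -⟩ := mem_arcs.mp ha
    rw [P.part_eq_of_mem ht hat] at ha₂
    exact ⟨(ha₁.trans_le (t.le_max' _ ha₂)).ne, hat⟩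
  · rintro ⟨hx, hxt⟩
    have hmax : t.max' (P.nonempty_of_mem_parts ht) ∈ P.part x := by
      rw [P.part_eq_of_mem ht hxt]; exact t.max'_mem _
    obtain ⟨a, ha, h₁, h₂, -⟩ :=
      exists_arc_of_le_of_lt hmax le_rfl (lt_of_le_of_ne (t.le_max' x hxt) hx)
    obtain rfl : a.1 = x := le_antisymm h₂ h₁
    exact ⟨a, ⟨ha, hxt⟩, rfl⟩

lemma card_arcs_of_part_eq_add_one {P : NCP n} {t : Finset (Fin n)} (ht : t ∈ P.parts) :
    #(P.arcs.filter fun a => P.part a.1 = t) + 1 = #t := by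
  rw [← card_image_of_injOn (f := Prod.fst), image_fst_arcs_of_part_eq ht,
    card_erase_add_one (t.max'_mem _)]
  intro a ha b hb
  exact eq_of_mem_arcs_of_fst_eq (mem_filter.mp ha).1 (mem_filter.mp hb).1

lemma card_parts_add_card_arcs (P : NCP n) : #P.parts + #P.arcs = n := by
  have hfiber : #P.arcs = ∑ t ∈ P.parts, #(P.arcs.filter fun a => P.part a.1 = t) :=
    card_eq_sum_card_fiberwise fun a _ => P.part_mem.mpr (mem_univ a.1)
  calc #P.parts + #P.arcs
      = ∑ t ∈ P.parts, (#(P.arcs.filter fun a => P.part a.1 = t) + 1) := by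
        rw [hfiber, sum_add_distrib, sum_const, smul_eq_mul, mul_one, add_comm]
    _ = ∑ t ∈ P.parts, #t := sum_congr rfl fun t ht => card_arcs_of_part_eq_add_one ht
    _ = n := by rw [P.sum_card_parts, card_univ, Fintype.card_fin]

def evenPos (p : Fin n) : Fin (2 * n) := ⟨2 * p, by omega⟩

def oddPos (p : Fin n) : Fin (2 * n) := ⟨2 * p + 1, by omega⟩

lemma jointRel_evenPos {P Q : NCP n} {p q : Fin n} (h : pRel P p q) :
    jointRel P Q (evenPos p) (evenPos q) :=
  Or.inl ⟨by simp [evenPos], by simp [evenPos], by simpa [evenPos] using h⟩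

lemma jointRel_oddPos {P Q : NCP n} {p q : Fin n} (h : pRel Q p q) :
    jointRel P Q (oddPos p) (oddPos q) :=
  Or.inr ⟨by simp [oddPos], by simp [oddPos], by simpa [oddPos, Nat.add_div_of_dvd_right] using h⟩

lemma evenPos_lt_oddPos {p q : Fin n} : evenPos p < oddPos q ↔ p ≤ q := by
  simp only [evenPos, oddPos, Fin.mk_lt_mk]; omega

lemma oddPos_lt_evenPos {p q : Fin n} : oddPos p < evenPos q ↔ p < q := by
  simp only [evenPos, oddPos, Fin.mk_lt_mk]; omega

lemma not_jointRel_evenPos_oddPos {P Q : NCP n} {p q : Fin n} :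
    ¬ jointRel P Q (evenPos p) (oddPos q) := by
  rintro (⟨-, h, -⟩ | ⟨h, -, -⟩) <;> simp [evenPos, oddPos] at h

lemma not_jointRel_oddPos_evenPos {P Q : NCP n} {p q : Fin n} :
    ¬ jointRel P Q (oddPos p) (evenPos q) := by
  rintro (⟨h, -, -⟩ | ⟨-, h, -⟩) <;> simp [evenPos, oddPos] at h

/-- The arcs of `P` passing over the point `g` of `Q`, which in the interleaved picture sits
between the points `g` and `g + 1` of `P`. -/
def arcsOver (P : NCP n) (g : Fin n) : Finset (Fin n × Fin n) :=
  P.arcs.filter fun a => a.1 ≤ g ∧ g < a.2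

lemma mem_arcsOver {P : NCP n} {g : Fin n} {a : Fin n × Fin n} :
    a ∈ P.arcsOver g ↔ a ∈ P.arcs ∧ a.1 ≤ g ∧ g < a.2 :=
  mem_filter

lemma arcsOver_subset_of_pRel {P Q : NCP n} (hR : RelNonCrossing (jointRel P Q)) {i j : Fin n}
    (h : pRel Q i j) : P.arcsOver i ⊆ P.arcsOver j := by
  intro b hb
  obtain ⟨hb, hbi, hib⟩ := mem_arcsOver.mp hb
  obtain ⟨-, hb₂, -⟩ := mem_arcs.mp hb
  have hPb : pRel P b.1 b.2 := pRel_iff_mem_part.mpr hb₂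
  refine mem_arcsOver.mpr ⟨hb, ?_⟩
  by_contra! hj
  rcases lt_or_ge j b.1 with hjb | hbj
  · exact not_jointRel_oddPos_evenPos <| hR _ _ _ _ (oddPos_lt_evenPos.mpr hjb)
      (evenPos_lt_oddPos.mpr hbi) (oddPos_lt_evenPos.mpr hib)
      (jointRel_oddPos (pRel_symm h)) (jointRel_evenPos hPb)
  · exact not_jointRel_evenPos_oddPos <| hR _ _ _ _ (evenPos_lt_oddPos.mpr hbi)
      (oddPos_lt_evenPos.mpr hib) (evenPos_lt_oddPos.mpr (hj hbj))
      (jointRel_evenPos hPb) (jointRel_oddPos h)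

lemma arcsOver_ne_of_pRel {P : NCP n} {x y g h : Fin n} (hxy : pRel P x y) (hxg : x ≤ g)
    (hgy : g < y) (hh : h < x ∨ y ≤ h) : P.arcsOver g ≠ P.arcsOver h := by
  obtain ⟨a, ha, hxa, hag, hga, hay⟩ := exists_arc_of_le_of_lt (pRel_iff_mem_part.mp hxy) hxg hgy
  intro hgh
  have := mem_arcsOver.mp (hgh ▸ mem_arcsOver.mpr ⟨ha, hag, hga⟩)
  omega

lemma arcsOver_eq_of_le_of_le {P : NCP n} {a b c d : Fin n} (hab : a ≤ b) (hbc : b ≤ c)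
    (hcd : c ≤ d) (hac : P.arcsOver a = P.arcsOver c) (hbd : P.arcsOver b = P.arcsOver d) :
    P.arcsOver a = P.arcsOver b := by
  refine filter_inj'.mpr fun e he => ?_
  have hac' := filter_inj'.mp hac he
  have hbd' := filter_inj'.mp hbd he
  constructor
  · intro h
    have := hac'.mp h
    omega
  · intro h
    have := hbd'.mp h
    omega

noncomputable def krewerasComplement (P : NCP n) : NCP n :=
  Finpartition.ofSetoid (Setoid.ker P.arcsOver)

lemma pRel_krewerasComplement {P : NCP n} {x y : Fin n} :
    pRel P.krewerasComplement x y ↔ P.arcsOver x = P.arcsOver y := by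
  rw [pRel_iff_mem_part, krewerasComplement, Finpartition.mem_part_ofSetoid_iff_rel,
    Setoid.ker_def]

lemma relNonCrossing_jointRel_krewerasComplement {P : NCP n} (hP : IsNonCrossing P) :
    RelNonCrossing (jointRel P P.krewerasComplement) := by
  intro a b c d hab hbc hcd hac hbd
  rcases hac with ⟨ha, hc, hac⟩ | ⟨ha, hc, hac⟩ <;> rcases hbd with ⟨hb, hd, hbd⟩ | ⟨hb, hd, hbd⟩
  · exact Or.inl ⟨ha, hb, hP _ _ _ _ (Fin.mk_lt_mk.mpr (by omega))
      (Fin.mk_lt_mk.mpr (by omega)) (Fin.mk_lt_mk.mpr (by omega)) hac hbd⟩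
  · exact absurd (pRel_krewerasComplement.mp hbd) <| arcsOver_ne_of_pRel hac
      (Fin.mk_le_mk.mpr (by omega)) (Fin.mk_lt_mk.mpr (by omega))
      (Or.inr (Fin.mk_le_mk.mpr (by omega)))
  · exact absurd (pRel_krewerasComplement.mp hac).symm <| arcsOver_ne_of_pRel hbd
      (Fin.mk_le_mk.mpr (by omega)) (Fin.mk_lt_mk.mpr (by omega))
      (Or.inl (Fin.mk_lt_mk.mpr (by omega)))
  · exact Or.inr ⟨ha, hb, pRel_krewerasComplement.mpr <| arcsOver_eq_of_le_of_le
      (Fin.mk_le_mk.mpr (by omega)) (Fin.mk_le_mk.mpr (by omega)) (Fin.mk_le_mk.mpr (by omega))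
      (pRel_krewerasComplement.mp hac) (pRel_krewerasComplement.mp hbd)⟩

lemma pRel_iff_arcsOver_eq {P Q : NCP n} (hP : IsNonCrossing P) (hQ : IsKr P Q) {x y : Fin n} :
    pRel Q x y ↔ P.arcsOver x = P.arcsOver y := by
  refine ⟨fun h => (arcsOver_subset_of_pRel hQ.1 h).antisymm
    (arcsOver_subset_of_pRel hQ.1 (pRel_symm h)), fun h => ?_⟩
  obtain ⟨t, ht, hx, hy⟩ := pRel_krewerasComplement.mpr h
  obtain ⟨u, hu, htu⟩ := hQ.2 _ (relNonCrossing_jointRel_krewerasComplement hP) ht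
  exact ⟨u, hu, htu hx, htu hy⟩

lemma mem_arcsOver_fst {P : NCP n} {a : Fin n × Fin n} (ha : a ∈ P.arcs) : a ∈ P.arcsOver a.1 :=
  mem_arcsOver.mpr ⟨ha, le_rfl, (mem_arcs.mp ha).1⟩

/-- By non-crossing, the arcs over `g` are nested, so they are the arcs over the left end
of the innermost one. -/
lemma arcsOver_eq_arcsOver_fst {P : NCP n} (hP : IsNonCrossing P) {g : Fin n}
    {a : Fin n × Fin n} (ha : a ∈ P.arcsOver g) (ha_max : ∀ b ∈ P.arcsOver g, b.1 ≤ a.1) :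
    P.arcsOver g = P.arcsOver a.1 := by
  obtain ⟨ha, hag, hga⟩ := mem_arcsOver.mp ha
  ext b
  refine ⟨fun hb => ?_, fun hb => ?_⟩
  · have := ha_max b hb
    obtain ⟨hb, -, hgb⟩ := mem_arcsOver.mp hb
    exact mem_arcsOver.mpr ⟨hb, this, hag.trans_lt hgb⟩
  · obtain ⟨hb, hba, hab⟩ := mem_arcsOver.mp hb
    have := le_snd_of_mem_arcs hP ha hb hba hab
    exact mem_arcsOver.mpr ⟨hb, hba.trans hag, hga.trans_le this⟩

lemma arcsOver_last {P : NCP n} (hn : 0 < n) : P.arcsOver ⟨n - 1, by omega⟩ = ∅ := by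
  ext a
  simp only [mem_arcsOver, notMem_empty, iff_false, Fin.lt_def]
  omega

lemma image_arcsOver {P : NCP n} (hP : IsNonCrossing P) (hn : 0 < n) :
    univ.image P.arcsOver = insert ∅ (P.arcs.image fun a => P.arcsOver a.1) := by
  ext s
  simp only [mem_image, mem_insert, mem_univ, true_and]
  refine ⟨?_, ?_⟩
  · rintro ⟨g, rfl⟩
    obtain hg | hg := (P.arcsOver g).eq_empty_or_nonempty
    · exact Or.inl hg
    obtain ⟨a, ha, ha_max⟩ := exists_max_image _ (fun a : Fin n × Fin n => a.1) hg
    exact Or.inr ⟨a, (mem_arcsOver.mp ha).1, (arcsOver_eq_arcsOver_fst hP ha ha_max).symm⟩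
  · rintro (rfl | ⟨a, -, rfl⟩)
    · exact ⟨_, arcsOver_last hn⟩
    · exact ⟨a.1, rfl⟩

lemma card_image_arcsOver {P : NCP n} (hP : IsNonCrossing P) (hn : 0 < n) :
    #(univ.image P.arcsOver) = #P.arcs + 1 := by
  rw [image_arcsOver hP hn, card_insert_of_notMem, card_image_of_injOn]
  · intro a ha b hb (hab : P.arcsOver a.1 = P.arcsOver b.1)
    have hab' := mem_arcsOver.mp (hab ▸ mem_arcsOver_fst ha)
    have hba' := mem_arcsOver.mp (hab.symm ▸ mem_arcsOver_fst hb)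
    exact eq_of_mem_arcs_of_fst_eq ha hb (le_antisymm hab'.2.1 hba'.2.1)
  · simp only [mem_image, not_exists, not_and]
    exact fun a ha h => notMem_empty a (h ▸ mem_arcsOver_fst ha)

end NCP

/-- For every non-crossing partition `P` of `{1,…,n}`, the number of blocks of `P` plus the
number of blocks of its Kreweras complement equals `n + 1`. -/
theorem stmt3 (n : ℕ) (hn : 0 < n) (P Q : NCP n) (hP : IsNonCrossing P)
    (hQ : IsKr P Q) : P.parts.card + Q.parts.card = n + 1 := by
  have hQ_classes : ∀ x y, y ∈ Q.part x ↔ P.arcsOver x = P.arcsOver y := fun x y =>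
    NCP.pRel_iff_mem_part.symm.trans (NCP.pRel_iff_arcsOver_eq hP hQ)
  rw [Q.card_parts_eq_card_image P.arcsOver hQ_classes, NCP.card_image_arcsOver hP hn,
    ← add_assoc, P.card_parts_add_card_arcs]
end

section
/- The Kreweras complement map Kr : NC(n) → NC(n) is an order-reversing bijection on the lattice of non-crossing partitions of {1,...,n} with the reverse refinement partial order. -/
open scoped BigOperators Classical

/-! Two points of the complement are in the same block of `kr P` when no chord of `P` separates
them. Interleaving `P` with `Q` is non-crossing exactly when `P` and `Q` are non-crossing and no
chord of `P` crosses a chord of `Q`, i.e. `Q ≤ kr P`; so `kr P` is the Kreweras complement, and it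
is antitone because a coarser `P` has more chords. A non-crossing `P` is recovered from `kr P`: if
`a < c` lie in different blocks, then either the elements of the block of `a` nearest to `c` on
either side, or the ends of that block, bound an interval which is a union of blocks of `P`, and
the two complement points at its ends are joined in `kr P` but separated by the chord `a c`. By
finiteness the injective map `kr` is a bijection. -/

section Kreweras

variable {n : ℕ}

lemma pRel_iff_part_eq {P : NCP n} {x y : Fin n} : pRel P x y ↔ P.part x = P.part y := by
  rw [pRel, ← P.mem_part_iff_exists, P.mem_part_iff_part_eq_part (Finset.mem_univ x)
    (Finset.mem_univ y)]

lemma pRel_refl (P : NCP n) (x : Fin n) : pRel P x x := pRel_iff_part_eq.2 rfl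

lemma pRel_symm {P : NCP n} {x y : Fin n} (h : pRel P x y) : pRel P y x :=
  pRel_iff_part_eq.2 (pRel_iff_part_eq.1 h).symm

lemma pRel_trans {P : NCP n} {x y z : Fin n} (h₁ : pRel P x y) (h₂ : pRel P y z) : pRel P x z :=
  pRel_iff_part_eq.2 ((pRel_iff_part_eq.1 h₁).trans (pRel_iff_part_eq.1 h₂))

lemma le_iff_forall_pRel {P Q : NCP n} : P ≤ Q ↔ ∀ x y, pRel P x y → pRel Q x y := by
  refine ⟨fun h x y ⟨t, ht, hx, hy⟩ => ?_, fun h t ht => ?_⟩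
  · obtain ⟨c, hc, htc⟩ := h ht
    exact ⟨c, hc, htc hx, htc hy⟩
  · obtain ⟨x, hx⟩ := P.nonempty_of_mem_parts ht
    exact ⟨Q.part x, Q.part_mem.2 (Finset.mem_univ x),
      fun y hy => Q.mem_part_iff_exists.2 (h y x ⟨t, ht, hy, hx⟩)⟩

/-- The point `x` of the complement sits between the points `x` and `x + 1` of `P` (position
`2x + 1` in `jointRel`); `krRel P x y` says that no chord of `P` separates the points `x` and `y`
of the complement. -/
def krRel (P : NCP n) (x y : Fin n) : Prop :=
  ∀ u v, pRel P u v → ((x < u ↔ x < v) ↔ (y < u ↔ y < v))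

lemma krRel_symm {P : NCP n} {x y : Fin n} (h : krRel P x y) : krRel P y x :=
  fun u v huv => (h u v huv).symm

def krSetoid (P : NCP n) : Setoid (Fin n) where
  r := krRel P
  iseqv := ⟨fun _ _ _ _ => Iff.rfl, krRel_symm,
    fun h₁ h₂ u v huv => (h₁ u v huv).trans (h₂ u v huv)⟩

noncomputable def kr (P : NCP n) : NCP n := Finpartition.ofSetoid (krSetoid P)

lemma pRel_kr_iff {P : NCP n} {x y : Fin n} : pRel (kr P) x y ↔ krRel P x y := by
  rw [pRel, ← Finpartition.mem_part_iff_exists, kr, Finpartition.mem_part_ofSetoid_iff_rel]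
  exact ⟨krRel_symm, krRel_symm⟩

lemma isNonCrossing_kr (P : NCP n) : IsNonCrossing (kr P) := by
  intro a b c d hab hbc hcd hac hbd
  rw [pRel_kr_iff] at *
  intro u v huv
  have := hac u v huv
  have := hbd u v huv
  omega

lemma kr_antitone : Antitone (kr (n := n)) := fun _ _ h =>
  le_iff_forall_pRel.2 fun _ _ hxy => pRel_kr_iff.2 fun u v huv =>
    pRel_kr_iff.1 hxy u v (le_iff_forall_pRel.1 h u v huv)

lemma jointRel_two_mul {P Q : NCP n} {u v : Fin n} (h : pRel P u v) :
    jointRel P Q ⟨2 * u, by omega⟩ ⟨2 * v, by omega⟩ := by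
  refine Or.inl ⟨by simp, by simp, ?_⟩
  convert h using 2 <;> dsimp only <;> omega

lemma jointRel_two_mul_add_one {P Q : NCP n} {x y : Fin n} (h : pRel Q x y) :
    jointRel P Q ⟨2 * x + 1, by omega⟩ ⟨2 * y + 1, by omega⟩ := by
  refine Or.inr ⟨by simp, by simp, ?_⟩
  convert h using 2 <;> dsimp only <;> omega

lemma mod_two_eq_of_jointRel {P Q : NCP n} {a b : Fin (2 * n)} (h : jointRel P Q a b) :
    (a : ℕ) % 2 = b % 2 :=
  h.elim (fun h => by omega) fun h => by omega

lemma not_interleaved_of_relNonCrossing {P Q : NCP n} (h : RelNonCrossing (jointRel P Q))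
    {u v x y : Fin n} (huv : pRel P u v) (hxy : pRel Q x y) :
    ¬ (u ≤ x ∧ x < v ∧ v ≤ y) ∧ ¬ (x < u ∧ u ≤ y ∧ y < v) := by
  constructor
  · rintro ⟨h₁, h₂, h₃⟩
    have := mod_two_eq_of_jointRel (h _ _ _ _ (Fin.mk_lt_mk.2 (by omega))
      (Fin.mk_lt_mk.2 (by omega)) (Fin.mk_lt_mk.2 (by omega))
      (jointRel_two_mul (Q := Q) huv) (jointRel_two_mul_add_one (P := P) hxy))
    simp at this
  · rintro ⟨h₁, h₂, h₃⟩
    have := mod_two_eq_of_jointRel (h _ _ _ _ (Fin.mk_lt_mk.2 (by omega))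
      (Fin.mk_lt_mk.2 (by omega)) (Fin.mk_lt_mk.2 (by omega))
      (jointRel_two_mul_add_one (P := P) hxy) (jointRel_two_mul (Q := Q) huv))
    simp at this

lemma le_kr_of_relNonCrossing {P Q : NCP n} (h : RelNonCrossing (jointRel P Q)) : Q ≤ kr P :=
  le_iff_forall_pRel.2 fun _ _ hxy => pRel_kr_iff.2 fun _ _ huv => by
    have h₁ := not_interleaved_of_relNonCrossing h huv hxy
    have h₂ := not_interleaved_of_relNonCrossing h (pRel_symm huv) hxy
    have h₃ := not_interleaved_of_relNonCrossing h huv (pRel_symm hxy)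
    have h₄ := not_interleaved_of_relNonCrossing h (pRel_symm huv) (pRel_symm hxy)
    omega

lemma relNonCrossing_jointRel {P Q : NCP n} (hP : IsNonCrossing P) (hQ : IsNonCrossing Q)
    (hQP : Q ≤ kr P) : RelNonCrossing (jointRel P Q) := by
  have compatible x y (hxy : pRel Q x y) := pRel_kr_iff.1 (le_iff_forall_pRel.1 hQP x y hxy)
  rintro a b c d hab hbc hcd (⟨ha, hc, hac⟩ | ⟨ha, hc, hac⟩)
    (⟨hb, hd, hbd⟩ | ⟨hb, hd, hbd⟩)
  · exact Or.inl ⟨ha, hb, hP _ _ _ _ (Fin.mk_lt_mk.2 (by omega)) (Fin.mk_lt_mk.2 (by omega))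
      (Fin.mk_lt_mk.2 (by omega)) hac hbd⟩
  · have := compatible _ _ hbd _ _ hac
    simp only [Fin.mk_lt_mk] at this
    omega
  · have := compatible _ _ hac _ _ hbd
    simp only [Fin.mk_lt_mk] at this
    omega
  · exact Or.inr ⟨ha, hb, hQ _ _ _ _ (Fin.mk_lt_mk.2 (by omega)) (Fin.mk_lt_mk.2 (by omega))
      (Fin.mk_lt_mk.2 (by omega)) hac hbd⟩

lemma isKr_kr {P : NCP n} (hP : IsNonCrossing P) : IsKr P (kr P) :=
  ⟨relNonCrossing_jointRel hP (isNonCrossing_kr P) le_rfl, fun _ => le_kr_of_relNonCrossing⟩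

lemma IsKr.unique {P Q Q' : NCP n} (h : IsKr P Q) (h' : IsKr P Q') : Q = Q' :=
  le_antisymm (h'.2 _ h.1) (h.2 _ h'.1)

lemma krRel_of_interval_closed {P : NCP n} {x y : Fin n} (hxy : x ≤ y)
    (h : ∀ u v, pRel P u v → x < u → u ≤ y → x < v ∧ v ≤ y) : krRel P x y := by
  intro u v huv
  have := h u v huv
  have := h v u (pRel_symm huv)
  omega

lemma IsNonCrossing.lt_and_lt_of_between {P : NCP n} (hP : IsNonCrossing P) {s t u v : Fin n}
    (hst : pRel P s t) (hsu : s < u) (hut : u < t) (huv : pRel P u v) (hnsu : ¬ pRel P s u) :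
    s < v ∧ v < t := by
  rcases lt_trichotomy v s with hvs | rfl | hsv
  · exact absurd (pRel_trans (pRel_symm (hP v s u t hvs hsu hut (pRel_symm huv) hst))
      (pRel_symm huv)) hnsu
  · exact absurd (pRel_symm huv) hnsu
  rcases lt_trichotomy v t with hvt | rfl | htv
  · exact ⟨hsv, hvt⟩
  · exact absurd (pRel_trans hst (pRel_symm huv)) hnsu
  · exact absurd (hP s u t v hsu hut htv hst huv) hnsu

section Separation

variable {P : NCP n} {a c : Fin n}

lemma exists_krRel_separating_of_exists_gt (hP : IsNonCrossing P) (hac : a < c)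
    (hnac : ¬ pRel P a c) (hout : ∃ t, pRel P a t ∧ c < t) :
    ∃ x y, krRel P x y ∧ a ≤ x ∧ x < c ∧ c ≤ y := by
  obtain ⟨x, ⟨hax, hxc⟩, hxmax⟩ := Set.exists_max_image {z | pRel P a z ∧ z < c} id
    (Set.toFinite _) ⟨a, pRel_refl P a, hac⟩
  obtain ⟨t, ⟨hat, hct⟩, htmin⟩ := Set.exists_min_image {z | pRel P a z ∧ c < z} id
    (Set.toFinite _) hout
  refine ⟨x, ⟨t - 1, by omega⟩, krRel_of_interval_closed (Fin.mk_le_mk.2 (by omega)) ?_,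
    hxmax a ⟨pRel_refl P a, hac⟩, hxc, Fin.mk_le_mk.2 (by omega)⟩
  intro u v huv hxu hut
  rw [Fin.le_def] at hut ⊢
  dsimp only at hut ⊢
  have hnxu : ¬ pRel P x u := fun hxu => by
    have hau := pRel_trans hax hxu
    rcases lt_trichotomy u c with huc | rfl | hcu
    · exact absurd (hxmax u ⟨hau, huc⟩) (by simp only [id]; omega)
    · exact hnac hau
    · exact absurd (htmin u ⟨hau, hcu⟩) (by simp only [id]; omega)
  have := hP.lt_and_lt_of_between (pRel_trans (pRel_symm hax) hat) hxu (by omega) huv hnxu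
  omega

lemma exists_krRel_separating_of_forall_lt (hP : IsNonCrossing P)
    (hin : ∀ t, pRel P a t → t < c) :
    ∃ x y, krRel P x y ∧ a ≤ x ∧ x < c ∧ (y < a ∨ c ≤ y) := by
  obtain ⟨m, ham, hmmin⟩ := Set.exists_min_image {z | pRel P a z} id (Set.toFinite _)
    ⟨a, pRel_refl P a⟩
  obtain ⟨M, haM, hMmax⟩ := Set.exists_max_image {z | pRel P a z} id (Set.toFinite _)
    ⟨a, pRel_refl P a⟩
  have hma : m ≤ a := hmmin a (pRel_refl P a)
  have haM' : a ≤ M := hMmax a (pRel_refl P a)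
  have hMc : M < c := hin M haM
  have hull_closed : ∀ u v, pRel P u v → m ≤ u → u ≤ M → m ≤ v ∧ v ≤ M := by
    intro u v huv hmu huM
    by_cases hau : pRel P a u
    · exact ⟨hmmin v (pRel_trans hau huv), hMmax v (pRel_trans hau huv)⟩
    have hnmu : ¬ pRel P m u := fun h => hau (pRel_trans ham h)
    have := hP.lt_and_lt_of_between (pRel_trans (pRel_symm ham) haM)
      (lt_of_le_of_ne hmu fun h => hau (h ▸ ham)) (lt_of_le_of_ne huM fun h => hau (h ▸ haM))
      huv hnmu
    exact ⟨this.1.le, this.2.le⟩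
  rcases Nat.eq_zero_or_pos m with hm0 | hm0
  · refine ⟨M, ⟨n - 1, by omega⟩, krRel_of_interval_closed (Fin.mk_le_mk.2 (by omega)) ?_,
      haM', hMc, Or.inr (Fin.mk_le_mk.2 (by omega))⟩
    intro u v huv hMu _
    refine ⟨lt_of_not_ge fun hvM => ?_, Fin.mk_le_mk.2 (by omega)⟩
    have := hull_closed v u (pRel_symm huv) (by omega) hvM
    omega
  · refine ⟨M, ⟨m - 1, by omega⟩,
      krRel_symm (krRel_of_interval_closed (Fin.mk_le_mk.2 (by omega)) ?_), haM', hMc,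
      Or.inl (Fin.mk_lt_mk.2 (by omega))⟩
    intro u v huv hmu huM
    have := hull_closed u v huv (by rw [Fin.lt_def] at hmu; dsimp only at hmu; omega) huM
    exact ⟨Fin.mk_lt_mk.2 (by omega), this.2⟩

lemma exists_krRel_separating (hP : IsNonCrossing P) (hac : a < c) (hnac : ¬ pRel P a c) :
    ∃ x y, krRel P x y ∧ a ≤ x ∧ x < c ∧ (y < a ∨ c ≤ y) := by
  by_cases hout : ∃ t, pRel P a t ∧ c < t
  · obtain ⟨x, y, hxy, hax, hxc, hcy⟩ := exists_krRel_separating_of_exists_gt hP hac hnac hout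
    exact ⟨x, y, hxy, hax, hxc, Or.inr hcy⟩
  simp only [not_exists, not_and, not_lt] at hout
  exact exists_krRel_separating_of_forall_lt hP fun t hat =>
    lt_of_le_of_ne (hout t hat) fun h => hnac (h ▸ hat)

end Separation

lemma IsNonCrossing.pRel_iff_forall_krRel {P : NCP n} (hP : IsNonCrossing P) {a c : Fin n} :
    pRel P a c ↔ ∀ x y, krRel P x y → ((x < a ↔ x < c) ↔ (y < a ↔ y < c)) := by
  refine ⟨fun h x y hxy => hxy a c h, fun h => by_contra fun hnac => ?_⟩
  rcases lt_trichotomy a c with hlt | rfl | hlt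
  · obtain ⟨x, y, hxy, h₁, h₂, h₃⟩ := exists_krRel_separating hP hlt hnac
    have := h x y hxy
    omega
  · exact hnac (pRel_refl P a)
  · obtain ⟨x, y, hxy, h₁, h₂, h₃⟩ :=
      exists_krRel_separating hP hlt fun h' => hnac (pRel_symm h')
    have := h x y hxy
    omega

lemma kr_injOn : Set.InjOn (kr (n := n)) {P | IsNonCrossing P} := by
  intro P (hP : IsNonCrossing P) Q (hQ : IsNonCrossing Q) hPQ
  have same_blocks a c : pRel P a c ↔ pRel Q a c := by
    simp only [hP.pRel_iff_forall_krRel, hQ.pRel_iff_forall_krRel, ← pRel_kr_iff, hPQ]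
  exact le_antisymm (le_iff_forall_pRel.2 fun a c => (same_blocks a c).1)
    (le_iff_forall_pRel.2 fun a c => (same_blocks a c).2)

end Kreweras

theorem stmt4_general (n : ℕ) :
    (∀ P : {P : NCP n // IsNonCrossing P}, ∃ Q : {Q : NCP n // IsNonCrossing Q},
        IsKr P.1 Q.1) ∧
    ∀ Kr : {P : NCP n // IsNonCrossing P} → {P : NCP n // IsNonCrossing P},
      (∀ P, IsKr P.1 (Kr P).1) →
        Function.Bijective Kr ∧
          ∀ P Q : {P : NCP n // IsNonCrossing P}, P.1 ≤ Q.1 → (Kr Q).1 ≤ (Kr P).1 := by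
  refine ⟨fun P => ⟨⟨kr P.1, isNonCrossing_kr P.1⟩, isKr_kr P.2⟩, fun Kr hKr => ?_⟩
  have hKr_eq P : (Kr P).1 = kr P.1 := (hKr P).unique (isKr_kr P.2)
  have hinj : Function.Injective Kr := fun P Q h =>
    Subtype.ext (kr_injOn P.2 Q.2 (by rw [← hKr_eq, ← hKr_eq, h]))
  refine ⟨⟨hinj, Finite.surjective_of_injective hinj⟩, fun P Q hPQ => ?_⟩
  rw [hKr_eq, hKr_eq]
  exact kr_antitone hPQ

/-- The Kreweras complement map exists on non-crossing partitions of `{1,…,n}` and any such map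
is an order-reversing bijection for the reverse refinement order. -/
theorem stmt4 (n : ℕ) (hn : 0 < n) :
    (∀ P : {P : NCP n // IsNonCrossing P}, ∃ Q : {Q : NCP n // IsNonCrossing Q},
        IsKr P.1 Q.1) ∧
    ∀ Kr : {P : NCP n // IsNonCrossing P} → {P : NCP n // IsNonCrossing P},
      (∀ P, IsKr P.1 (Kr P).1) →
        Function.Bijective Kr ∧
          ∀ P Q : {P : NCP n // IsNonCrossing P}, P.1 ≤ Q.1 → (Kr Q).1 ≤ (Kr P).1 :=
  stmt4_general n
end

section
/- For each fixed n ≥ 1, the ratio |NC(k,n)_{2,1}| / |NC_k(n)| tends to 1 as k tends to infinity, where |NC_k(n)| = binom(kn,n)/((k-1)n+1) and |NC(k,n)_{2,1}| = k((k-1)n)!/(((k-2)n+2)!(n-1)!). -/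
open scoped BigOperators Classical

/-!
Writing `x = (k - 2) n + 1`, the ratio is exactly
`(x + n - 1)! (x + n)! / ((x + 1)! (x + 2n - 2)!)`. Since `(x + p)! ~ x! x^p` as `x → ∞`
for each fixed `p`, and the shifts balance (`(n - 1) + n = 1 + (2n - 2)`), the ratio tends to `1`.
-/

open Filter Topology
open scoped Nat

theorem tendsto_factorial_add_div_factorial_mul_pow (p : ℕ) :
    Tendsto (fun x : ℕ => ((x + p)! : ℝ) / (x ! * (x : ℝ) ^ p)) atTop (𝓝 1) := by
  induction p with
  | zero => exact tendsto_const_nhds.congr fun x => by simp [Nat.factorial_ne_zero]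
  | succ p ih =>
    have hstep : Tendsto (fun x : ℕ => ((x : ℝ) / (x + (p + 1)))⁻¹) atTop (𝓝 1) := by
      simpa using (tendsto_natCast_div_add_atTop ((p : ℝ) + 1)).inv₀ one_ne_zero
    refine (mul_one (1 : ℝ) ▸ ih.mul hstep).congr' ?_
    filter_upwards [eventually_ne_atTop 0] with x hx
    rw [← add_assoc x p 1, Nat.factorial_succ]
    push_cast
    field_simp
    ring

theorem tendsto_factorial_mul_factorial_div_factorial_mul_factorial {p q r s : ℕ}
    (h : p + q = r + s) :
    Tendsto (fun x : ℕ => ((x + p)! * (x + q)! : ℝ) / ((x + r)! * (x + s)!)) atTop (𝓝 1) := by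
  have hA := tendsto_factorial_add_div_factorial_mul_pow
  have hlim := ((hA p).mul (hA q)).div ((hA r).mul (hA s)) (by norm_num)
  rw [mul_one, div_one] at hlim
  refine hlim.congr' ?_
  filter_upwards [eventually_ne_atTop 0] with x hx
  have hpow : (x : ℝ) ^ p * (x : ℝ) ^ q = (x : ℝ) ^ r * (x : ℝ) ^ s := by
    rw [← pow_add, ← pow_add, h]
  simp only [Pi.div_apply]
  rw [div_mul_div_comm, div_mul_div_comm, mul_mul_mul_comm (x ! : ℝ), hpow,
    ← mul_mul_mul_comm (x ! : ℝ), div_div_div_cancel_right₀ (by positivity)]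

/-- `|NC(k,n)_{2,1}| / |NC_k(n)|`, in the closed forms of the two counts. -/
noncomputable def ncTwoOneRatio (k n : ℕ) : ℝ :=
  (((k : ℝ) * (((k - 1) * n).factorial : ℝ)) /
      (((((k - 2) * n + 2).factorial : ℕ) : ℝ) * ((n - 1).factorial : ℝ))) /
    ((((k * n).choose n : ℕ) : ℝ) / ((((k - 1) * n + 1 : ℕ) : ℝ)))

theorem ncTwoOneRatio_add_two_add_one (j m : ℕ) :
    ncTwoOneRatio (j + 2) (m + 1) =
      ((j * (m + 1) + 1 + m)! * (j * (m + 1) + 1 + (m + 1))! : ℝ) /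
        ((j * (m + 1) + 1 + 1)! * (j * (m + 1) + 1 + 2 * m)!) := by
  set a := (j + 1) * (m + 1) with ha
  have e1 : (j + 2) * (m + 1) = a + (m + 1) := by ring
  have e2 : j * (m + 1) + 1 + m = a := by ring
  have e3 : j * (m + 1) + 1 + (m + 1) = a + 1 := by ring
  have e4 : j * (m + 1) + 1 + 2 * m = a + m := by ring
  have hC : (((a + (m + 1)).choose (m + 1) : ℕ) : ℝ) = (a + (m + 1))! / (a ! * (m + 1)!) := by
    rw [eq_div_iff (by positivity), ← mul_assoc]
    exact_mod_cast Nat.add_choose_mul_factorial_mul_factorial a (m + 1)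
  simp only [ncTwoOneRatio, e1, e2, e3, e4, Nat.add_sub_cancel]
  rw [hC, ← add_assoc, Nat.factorial_succ (a + m), Nat.factorial_succ a, Nat.factorial_succ m]
  push_cast
  field_simp
  push_cast [ha]
  ring

/-- For fixed `n ≥ 1`, `|NC(k,n)_{2,1}| / |NC_k(n)| → 1` as `k → ∞`, where
`|NC_k(n)| = binom(kn,n)/((k-1)n+1)` and `|NC(k,n)_{2,1}| = k((k-1)n)!/(((k-2)n+2)!(n-1)!)`. -/
theorem stmt7 (n : ℕ) (hn : 1 ≤ n) :
    Filter.Tendsto (fun k : ℕ =>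
      (((k : ℝ) * (((k - 1) * n).factorial : ℝ)) /
          (((((k - 2) * n + 2).factorial : ℕ) : ℝ) * ((n - 1).factorial : ℝ))) /
        ((((k * n).choose n : ℕ) : ℝ) / ((((k - 1) * n + 1 : ℕ) : ℝ))))
      Filter.atTop (nhds 1) := by
  change Tendsto (fun k => ncTwoOneRatio k n) atTop (𝓝 1)
  obtain ⟨m, rfl⟩ := Nat.exists_eq_add_of_le' hn
  rw [← tendsto_add_atTop_iff_nat 2]
  have hx : Tendsto (fun j : ℕ => j * (m + 1) + 1) atTop atTop :=
    tendsto_atTop_mono (fun j => (Nat.le_mul_of_pos_right j m.succ_pos).trans (Nat.le_succ _))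
      tendsto_id
  refine ((tendsto_factorial_mul_factorial_div_factorial_mul_factorial
    (p := m) (q := m + 1) (r := 1) (s := 2 * m) (by ring)).comp hx).congr fun j => ?_
  exact (ncTwoOneRatio_add_two_add_one j m).symm
end

section
/- Let pi be a non-crossing partition of {1,...,kn} and let I_r^{sk}(pi) be the partition of {1,...,kn+sk} obtained by duplicating the element at position r (joining position r and r+sk into the same block as position r was in) and inserting sk-1 singletons between them. Then pi is k-preserving if and only if I_r^{sk}(pi) is k-preserving. -/
open scoped BigOperators Classical

/-- Position correspondence for the duplication–insertion operation `I_r^j` (1-indexed `r`):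
position `x` of the new partition corresponds to position `a` of the old one. Positions
`r+1,…,r+j-1` (1-indexed) correspond to nothing (they are singletons), and both positions
`r` and `r+j` correspond to the old position `r`. -/
def dRel (j r : ℕ) {n : ℕ} (x : Fin (n + j)) (a : Fin n) : Prop :=
  ((x : ℕ) < r ∧ (a : ℕ) = (x : ℕ)) ∨
  ((x : ℕ) = r - 1 + j ∧ (a : ℕ) = r - 1) ∨
  (r - 1 + j < (x : ℕ) ∧ (a : ℕ) + j = (x : ℕ))

/-- `P'` is obtained from `P` by the duplication–insertion operation `I_r^j`: the element at
(1-indexed) position `r` is duplicated (positions `r` and `r+j` are joined into the block that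
contained `r`) and `j-1` singletons are inserted between them. -/
def IsDupIns {n : ℕ} (j r : ℕ) (P : NCP n) (P' : NCP (n + j)) : Prop :=
  ∀ x y : Fin (n + j), pRel P' x y ↔
    (x = y ∨ ∃ a b : Fin n, dRel j r x a ∧ dRel j r y b ∧ pRel P a b)

/-- Position correspondence for the interval-insertion operation `Ĩ_r^j` (1-indexed `r`):
the new interval block occupies (1-indexed) positions `r,…,r+j-1`. -/
def iRel (j r : ℕ) {n : ℕ} (x : Fin (n + j)) (a : Fin n) : Prop :=
  ((x : ℕ) < r - 1 ∧ (a : ℕ) = (x : ℕ)) ∨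
  (r - 1 + j ≤ (x : ℕ) ∧ (a : ℕ) + j = (x : ℕ))

/-- `P'` is obtained from `P` by the interval-insertion operation `Ĩ_r^j`: a new interval block
of size `j` is inserted between (1-indexed) positions `r-1` and `r`. -/
def IsIntIns {n : ℕ} (j r : ℕ) (P : NCP n) (P' : NCP (n + j)) : Prop :=
  ∀ x y : Fin (n + j), pRel P' x y ↔
    ((r - 1 ≤ (x : ℕ) ∧ (x : ℕ) < r - 1 + j ∧ r - 1 ≤ (y : ℕ) ∧ (y : ℕ) < r - 1 + j) ∨
      ∃ a b : Fin n, iRel j r x a ∧ iRel j r y b ∧ pRel P a b)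

/-- `P` is `k`-preserving if and only if the duplication–insertion `I_r^{sk}(P)` is. -/
theorem stmt11 (k n s r : ℕ) (hk : 0 < k) (hn : 0 < n) (hs : 1 ≤ s)
    (hr1 : 1 ≤ r) (hr2 : r ≤ k * n) (P : NCP (k * n)) (hP : IsNonCrossing P)
    (P' : NCP (k * n + s * k)) (h : IsDupIns (s * k) r P P') :
    IsKPreserving k P ↔ IsKPreserving k P' := by
  have key : ∀ (x : Fin (k*n + s*k)) (a : Fin (k*n)), dRel (s*k) r x a →
      (x : ℕ) % k = (a : ℕ) % k := by
    rintro x a (⟨_, h1⟩ | ⟨h1, h2⟩ | ⟨_, h3⟩)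
    · rw [h1]
    · rw [h1, h2, Nat.add_mul_mod_self_right]
    · rw [← h3, Nat.add_mul_mod_self_right]
  have pRelP : ∀ {m : ℕ} (Q : NCP m), IsKPreserving k Q ↔
      ∀ x y, pRel Q x y → (x : ℕ) % k = (y : ℕ) % k := by
    intro m Q
    constructor
    · rintro hQ x y ⟨t, ht, hx, hy⟩; exact hQ t ht x hx y hy
    · intro hQ t ht x hx y hy; exact hQ x y ⟨t, ht, hx, hy⟩
  rw [pRelP, pRelP]
  constructor
  · intro hPk x y hxy
    rcases (h x y).mp hxy with rfl | ⟨a, b, hxa, hyb, hab⟩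
    · rfl
    · rw [key x a hxa, key y b hyb]; exact hPk a b hab
  · intro hPk a b hab
    set f : Fin (k*n) → Fin (k*n + s*k) := fun c =>
      if _ : (c : ℕ) < r then ⟨c, by have := c.isLt; omega⟩
      else ⟨(c : ℕ) + s*k, by have := c.isLt; omega⟩ with hf
    have hd : ∀ c : Fin (k*n), dRel (s*k) r (f c) c := by
      intro c
      by_cases hc : (c : ℕ) < r
      · left; simp [hf, hc]
      · right; right; simp only [hf, hc, dif_neg, not_false_iff]
        constructor
        · omega
        · trivial
    have hx := (h (f a) (f b)).mpr (Or.inr ⟨a, b, hd a, hd b, hab⟩)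
    have hres := hPk _ _ hx
    rw [key _ _ (hd a), key _ _ (hd b)] at hres
    exact hres
end
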